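/- arXiv:1504.03666 — 9 statements merged into one kernel-verified Lean document; each statement's English description precedes it below -/
import Mathlib

section
/- Let G be a co-bipartite chain graph with clique partition (K, K'), where K and K' are both nonempty. If every vertex of K has a neighbor in K' and every vertex of K' has a neighbor in K, then G contains a pair of twins, i.e., two distinct adjacent vertices u, v with N(u) \ {v} = N(v) \ {u}. -/
/-- Let `G` be a co-bipartite chain graph with clique partition `(K, K')`, both cliques
nonempty. If every vertex of `K` has a neighbor in `K'` and every vertex of `K'` has a
neighbor in `K`, then `G` contains a pair of twins: two distinct adjacent vertices `u, v`
with `N(u) \ {v} = N(v) \ {u}`. -/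
theorem cochain_exists_twins {V : Type*} [Fintype V] (G : SimpleGraph V)
    (K K' : Set V)
    (hdisj : Disjoint K K') (hcover : K ∪ K' = Set.univ)
    (hK : G.IsClique K) (hK' : G.IsClique K')
    (hchain : ∀ u ∈ K, ∀ w ∈ K,
      G.neighborSet u ⊆ G.neighborSet w ∨ G.neighborSet w ⊆ G.neighborSet u)
    (hKne : K.Nonempty) (hK'ne : K'.Nonempty)
    (h1 : ∀ v ∈ K, ∃ w ∈ K', G.Adj v w)
    (h2 : ∀ v ∈ K', ∃ w ∈ K, G.Adj v w) :
    ∃ u v : V, u ≠ v ∧ G.Adj u v ∧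
      G.neighborSet u \ {v} = G.neighborSet v \ {u} := by
  classical
  have hKfin : K.Finite := Set.toFinite K
  have hKne' : hKfin.toFinset.Nonempty := by
    simpa [Set.Finite.toFinset] using hKne
  -- maximal element of K
  obtain ⟨u, huF, humax⟩ := hKfin.toFinset.exists_max_image
    (fun x => (G.neighborFinset x).card) hKne'
  have huK : u ∈ K := (Set.Finite.mem_toFinset hKfin).1 huF
  have hu : ∀ x ∈ K, G.neighborSet x ⊆ G.neighborSet u := by
    intro x hx
    rcases hchain x hx u huK with h | h
    · exact h
    · have hsub : G.neighborFinset u ⊆ G.neighborFinset x := by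
        intro a ha
        simpa [SimpleGraph.mem_neighborFinset] using
          h (by simpa [SimpleGraph.mem_neighborFinset] using ha)
      have hcard : (G.neighborFinset x).card ≤ (G.neighborFinset u).card :=
        humax x ((Set.Finite.mem_toFinset hKfin).2 hx)
      have : G.neighborFinset u = G.neighborFinset x :=
        Finset.eq_of_subset_of_card_le hsub hcard
      intro a ha
      have : a ∈ G.neighborFinset u := by
        rw [this]; simpa [SimpleGraph.mem_neighborFinset] using ha
      simpa [SimpleGraph.mem_neighborFinset] using this
  -- minimal element of K
  obtain ⟨m, hmF, hmmin⟩ := hKfin.toFinset.exists_min_image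
    (fun x => (G.neighborFinset x).card) hKne'
  have hmK : m ∈ K := (Set.Finite.mem_toFinset hKfin).1 hmF
  have hm : ∀ x ∈ K, G.neighborSet m ⊆ G.neighborSet x := by
    intro x hx
    rcases hchain m hmK x hx with h | h
    · exact h
    · have hsub : G.neighborFinset x ⊆ G.neighborFinset m := by
        intro a ha
        simpa [SimpleGraph.mem_neighborFinset] using
          h (by simpa [SimpleGraph.mem_neighborFinset] using ha)
      have hcard : (G.neighborFinset m).card ≤ (G.neighborFinset x).card :=
        hmmin x ((Set.Finite.mem_toFinset hKfin).2 hx)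
      have : G.neighborFinset x = G.neighborFinset m :=
        Finset.eq_of_subset_of_card_le hsub hcard
      intro a ha
      have : a ∈ G.neighborFinset x := by
        rw [this]; simpa [SimpleGraph.mem_neighborFinset] using ha
      simpa [SimpleGraph.mem_neighborFinset] using this
  obtain ⟨w, hwK', hmw⟩ := h1 m hmK
  -- u is universal
  have hu_univ : ∀ v : V, v ≠ u → G.Adj u v := by
    intro v hv
    have hvmem : v ∈ K ∪ K' := by rw [hcover]; trivial
    rcases hvmem with hvK | hvK'
    · exact hK huK hvK (Ne.symm hv)
    · obtain ⟨x, hxK, hvx⟩ := h2 v hvK'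
      have : v ∈ G.neighborSet x := hvx.symm
      exact hu x hxK this
  -- w is universal
  have hw_univ : ∀ v : V, v ≠ w → G.Adj w v := by
    intro v hv
    have hvmem : v ∈ K ∪ K' := by rw [hcover]; trivial
    rcases hvmem with hvK | hvK'
    · have : w ∈ G.neighborSet v := hm v hvK hmw
      exact this.symm
    · exact hK' hwK' hvK' (Ne.symm hv)
  have hune : u ≠ w := by
    rintro rfl
    exact (Set.disjoint_left.1 hdisj huK) hwK'
  refine ⟨u, w, hune, hu_univ w (Ne.symm hune), ?_⟩
  ext x
  simp only [Set.mem_diff, SimpleGraph.mem_neighborSet, Set.mem_singleton_iff]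
  constructor
  · rintro ⟨hadj, hxw⟩
    exact ⟨hw_univ x hxw, (G.ne_of_adj hadj).symm⟩
  · rintro ⟨hadj, hxu⟩
    exact ⟨hu_univ x hxu, (G.ne_of_adj hadj).symm⟩
end

section
/- Let S be a cut of CC_k and let 0 ≤ i < k. If rows i and i+1 are both monochromatic, or both bichromatic, with respect to S, then cs(swap(S,i)) = cs(S). -/
/-- The cut size of a cut `S` of a finite simple graph `G`: the number of edges of `G` with
exactly one endpoint in `S` (counted as ordered pairs whose first component is in `S`). -/
def cutSize {V : Type*} [Fintype V] [DecidableEq V] (G : SimpleGraph V) [DecidableRel G.Adj]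
    (S : Finset V) : ℕ :=
  ((Finset.univ : Finset (V × V)).filter fun p => G.Adj p.1 p.2 ∧ p.1 ∈ S ∧ p.2 ∉ S).card

def ccRel (k : ℕ) : (Fin (k+1) ⊕ Fin (k+1)) → (Fin (k+1) ⊕ Fin (k+1)) → Prop
  | Sum.inl _, Sum.inl _ => True
  | Sum.inr _, Sum.inr _ => True
  | Sum.inl i, Sum.inr j => (j : ℕ) < (i : ℕ)
  | Sum.inr _, Sum.inl _ => False

instance (k : ℕ) : DecidableRel (ccRel k) := fun u v =>
  match u, v with
  | Sum.inl _, Sum.inl _ => inferInstanceAs (Decidable True)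
  | Sum.inr _, Sum.inr _ => inferInstanceAs (Decidable True)
  | Sum.inl i, Sum.inr j => inferInstanceAs (Decidable ((j : ℕ) < (i : ℕ)))
  | Sum.inr _, Sum.inl _ => inferInstanceAs (Decidable False)

/-- The graph `CC_k`: vertices `v_0,…,v_k` (encoded `Sum.inl i`) and `v'_0,…,v'_k`
(encoded `Sum.inr j`); each side is a clique and `v_i ~ v'_j` iff `j < i`. -/
def CCk (k : ℕ) : SimpleGraph (Fin (k+1) ⊕ Fin (k+1)) := SimpleGraph.fromRel (ccRel k)

instance (k : ℕ) : DecidableRel (CCk k).Adj := fun u v =>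
  inferInstanceAs (Decidable (u ≠ v ∧ (ccRel k u v ∨ ccRel k v u)))

/-- Row `i` of a cut `S` of `CC_k` is monochromatic: `v_i` and `v'_i` are both in `S` or
both not in `S` (otherwise the row is bichromatic). -/
def rowMono (k : ℕ) (S : Finset (Fin (k+1) ⊕ Fin (k+1))) (i : Fin (k+1)) : Prop :=
  (Sum.inl i ∈ S ↔ Sum.inr i ∈ S)

/-- `swap(S,i)`: the cut obtained from `S` by exchanging the memberships of `v_i` and
`v_{i+1}` and exchanging the memberships of `v'_i` and `v'_{i+1}`. -/
def swapCut (k : ℕ) (S : Finset (Fin (k+1) ⊕ Fin (k+1))) (i : Fin k) :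
    Finset (Fin (k+1) ⊕ Fin (k+1)) :=
  S.image ((Equiv.swap (Sum.inl i.castSucc : Fin (k+1) ⊕ Fin (k+1)) (Sum.inl i.succ)).trans
    (Equiv.swap (Sum.inr i.castSucc : Fin (k+1) ⊕ Fin (k+1)) (Sum.inr i.succ)))

/-!
Exchanging rows `i` and `i+1` relabels the vertices by the permutation `σ` swapping `i` and
`i+1` on both sides, so `cs(swap(S,i))` is the cut size of `S` in the pulled-back graph
`σ*CC_k`. This graph differs from `CC_k` only in having the edge `v_i v'_{i+1}` instead of
`v_{i+1} v'_i`; hence the two cut sizes agree as soon as these two edges are either both cut by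
`S` or both not cut. That happens exactly when the four memberships of `v_i, v'_i, v_{i+1},
v'_{i+1}` in `S` have even parity, i.e. when rows `i` and `i+1` are of the same kind.
-/

open Finset SimpleGraph

section CutSize

variable {V : Type*} [Fintype V] [DecidableEq V]

lemma cutSize_congr {G H : SimpleGraph V} [DecidableRel G.Adj] [DecidableRel H.Adj]
    (hGH : G = H) (S : Finset V) : cutSize G S = cutSize H S := by
  subst hGH
  congr

lemma cutSize_image_equiv (G : SimpleGraph V) (σ : V ≃ V) [DecidableRel G.Adj]
    [DecidableRel (G.comap σ).Adj] (S : Finset V) :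
    cutSize G (S.image σ) = cutSize (G.comap σ) S := by
  refine (card_equiv (σ.prodCongr σ) fun p => ?_).symm
  simp

lemma cutSize_sup {G H : SimpleGraph V} [DecidableRel G.Adj] [DecidableRel H.Adj]
    [DecidableRel (G ⊔ H).Adj] (hGH : Disjoint G H) (S : Finset V) :
    cutSize (G ⊔ H) S = cutSize G S + cutSize H S := by
  rw [cutSize, cutSize, cutSize, ← card_union_of_disjoint]
  · congr 1
    ext p
    simp [or_and_right]
  · rw [disjoint_filter]
    intro p _ hG hH
    exact (hGH.le_bot ⟨hG.1, hH.1⟩ : (⊥ : SimpleGraph V).Adj p.1 p.2)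

lemma cutSize_edge {u v : V} (huv : u ≠ v) [DecidableRel (edge u v).Adj] (S : Finset V) :
    cutSize (edge u v) S = if (u ∈ S ↔ v ∈ S) then 0 else 1 := by
  rw [cutSize]
  split_ifs with hS
  · rw [card_eq_zero, filter_eq_empty_iff]
    rintro ⟨a, b⟩ - ⟨hab, ha, hb⟩
    rw [edge_adj] at hab
    grind
  · refine card_eq_one.2 ⟨if u ∈ S then (u, v) else (v, u), ?_⟩
    ext ⟨a, b⟩
    simp only [mem_filter, mem_univ, true_and, edge_adj, mem_singleton]
    split_ifs <;> grind

end CutSize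

section CCk

variable {k : ℕ}

@[simp] lemma CCk_adj_inl_inl (a b : Fin (k+1)) : (CCk k).Adj (.inl a) (.inl b) ↔ a ≠ b := by
  simp [CCk, ccRel]

@[simp] lemma CCk_adj_inr_inr (a b : Fin (k+1)) : (CCk k).Adj (.inr a) (.inr b) ↔ a ≠ b := by
  simp [CCk, ccRel]

@[simp] lemma CCk_adj_inl_inr (a b : Fin (k+1)) : (CCk k).Adj (.inl a) (.inr b) ↔ b < a := by
  simp [CCk, ccRel]

@[simp] lemma CCk_adj_inr_inl (a b : Fin (k+1)) : (CCk k).Adj (.inr a) (.inl b) ↔ a < b := by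
  simp [CCk, ccRel]

lemma swapCut_eq_image_sumCongr (S : Finset (Fin (k+1) ⊕ Fin (k+1))) (i : Fin k) :
    swapCut k S i =
      S.image (Equiv.sumCongr (Equiv.swap i.castSucc i.succ) (Equiv.swap i.castSucc i.succ)) := by
  rw [swapCut]
  congr 1
  ext (a | a) <;> simp [Equiv.swap_apply_def] <;> split_ifs <;> simp_all

lemma swap_castSucc_succ_lt_or_iff (i : Fin k) (a b : Fin (k+1)) :
    Equiv.swap i.castSucc i.succ b < Equiv.swap i.castSucc i.succ a ∨
        a = i.succ ∧ b = i.castSucc ↔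
      b < a ∨ a = i.castSucc ∧ b = i.succ := by
  simp only [Equiv.swap_apply_def]
  split_ifs <;> simp only [Fin.lt_def, Fin.ext_iff, Fin.val_succ, Fin.val_castSucc] at * <;> omega

lemma CCk_comap_swap_sup_edge (i : Fin k) :
    (CCk k).comap (Equiv.sumCongr (Equiv.swap i.castSucc i.succ) (Equiv.swap i.castSucc i.succ))
        ⊔ edge (.inl i.succ) (.inr i.castSucc) =
      CCk k ⊔ edge (.inl i.castSucc) (.inr i.succ) := by
  ext (a | a) (b | b)
  · simp [edge_adj]
  · simpa [edge_adj] using swap_castSucc_succ_lt_or_iff i a b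
  · simpa [edge_adj, and_comm] using swap_castSucc_succ_lt_or_iff i b a
  · simp [edge_adj]

end CCk

/-- If rows `i` and `i+1` are both monochromatic or both bichromatic with respect to a cut
`S` of `CC_k`, then `cs(swap(S,i)) = cs(S)`. -/
theorem cutSize_swapCut_of_same_kind (k : ℕ) (S : Finset (Fin (k+1) ⊕ Fin (k+1))) (i : Fin k)
    (h : rowMono k S i.castSucc ↔ rowMono k S i.succ) :
    cutSize (CCk k) (swapCut k S i) = cutSize (CCk k) S := by
  classical
  have hi : i.castSucc < i.succ := Fin.castSucc_lt_succ
  have hsum := cutSize_congr (CCk_comap_swap_sup_edge i) S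
  rw [cutSize_sup ((disjoint_edge _).2 (by simp [hi.not_gt])),
    cutSize_sup ((disjoint_edge _).2 (by simp [hi.not_gt]))] at hsum
  have hedge : cutSize (edge (.inl i.succ) (.inr i.castSucc)) S =
      cutSize (edge (.inl i.castSucc) (.inr i.succ)) S := by
    rw [cutSize_edge Sum.inl_ne_inr, cutSize_edge Sum.inl_ne_inr]
    unfold rowMono at h
    exact if_congr (by tauto) rfl rfl
  rw [swapCut_eq_image_sumCongr, cutSize_image_equiv]
  omega
end

section
/- For every natural number k there exists a maximum cut S of CC_k (i.e., a cut attaining the maximum cut size of CC_k) such that, for each of the four row types S×S, S̄×S̄, S×S̄, S̄×S, the set of indices i ∈ {0,…,k} whose row has that type is a (possibly empty) interval of consecutive integers. -/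
set_option linter.unusedSectionVars false
set_option maxHeartbeats 1000000


/-- The maximum cut size of a finite simple graph `G`. -/
def maxCut {V : Type*} [Fintype V] [DecidableEq V] (G : SimpleGraph V) [DecidableRel G.Adj] : ℕ :=
  Finset.univ.powerset.sup fun S => cutSize G S

/-- The type of row `i` w.r.t. a cut `S` of `CC_k`, encoded as the pair of membership
booleans `(v_i ∈ S, v'_i ∈ S)`; the four possible values correspond to the four row types
`S×S`, `S̄×S̄`, `S×S̄`, `S̄×S`. -/
def rowType (k : ℕ) (S : Finset (Fin (k+1) ⊕ Fin (k+1))) (i : Fin (k+1)) : Bool × Bool :=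
  (decide (Sum.inl i ∈ S), decide (Sum.inr i ∈ S))

namespace CCkAux

variable {n : ℕ}

def cnt (T : Fin n → Bool × Bool) (s : Bool × Bool) : ℕ :=
  ∑ i : Fin n, if T i = s then 1 else 0
def Npair (T : Fin n → Bool × Bool) (s t : Bool × Bool) : ℕ :=
  ∑ x : Fin n, ∑ y : Fin n, if x < y ∧ T x = s ∧ T y = t then 1 else 0
/-- cross contribution -/
def CT (T : Fin n → Bool × Bool) : ℕ :=
  ∑ x : Fin n, ∑ y : Fin n, if x < y ∧ (T x).2 ≠ (T y).1 then 1 else 0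

lemma CT_eq (T : Fin n → Bool × Bool) :
    CT T = Npair T (true,true) (false,false) + Npair T (true,true) (false,true)
      + Npair T (false,false) (true,true) + Npair T (false,false) (true,false)
      + Npair T (true,false) (true,true) + Npair T (true,false) (true,false)
      + Npair T (false,true) (false,false) + Npair T (false,true) (false,true) := by
  simp only [CT, Npair, ← Finset.sum_add_distrib]
  refine Finset.sum_congr rfl fun x _ => Finset.sum_congr rfl fun y _ => ?_
  rcases hx : T x with ⟨a1, a2⟩
  rcases hy : T y with ⟨b1, b2⟩
  by_cases hxy : x < y <;> rcases a1 <;> rcases a2 <;> rcases b1 <;> rcases b2 <;>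
    simp [hxy, Prod.ext_iff]

lemma Npair_add_Npair (T : Fin n → Bool × Bool) {s t : Bool × Bool} (hst : s ≠ t) :
    Npair T s t + Npair T t s = cnt T s * cnt T t := by
  have h2 : Npair T t s = ∑ x : Fin n, ∑ y : Fin n,
      if y < x ∧ T x = s ∧ T y = t then 1 else 0 := by
    rw [Npair, Finset.sum_comm]
    refine Finset.sum_congr rfl fun x _ => Finset.sum_congr rfl fun y _ => ?_
    congr 1
    simp only [eq_iff_iff]
    tauto
  rw [Npair, h2, ← Finset.sum_add_distrib, cnt, cnt, Finset.sum_mul_sum]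
  refine Finset.sum_congr rfl fun x _ => ?_
  rw [← Finset.sum_add_distrib]
  refine Finset.sum_congr rfl fun y _ => ?_
  by_cases hx : T x = s <;> by_cases hy : T y = t
  · have hxy : x ≠ y := by rintro rfl; exact hst (hx ▸ hy ▸ rfl)
    rcases lt_or_gt_of_ne hxy with h | h
    · simp [h, hx, hy, not_lt_of_gt h]
    · simp [h, hx, hy, not_lt_of_gt h]
  all_goals simp [hx, hy]

lemma two_Npair_self (T : Fin n → Bool × Bool) (s : Bool × Bool) :
    2 * Npair T s s = cnt T s * (cnt T s - 1) := by
  have h2 : Npair T s s = ∑ x : Fin n, ∑ y : Fin n,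
      if y < x ∧ T x = s ∧ T y = s then 1 else 0 := by
    rw [Npair, Finset.sum_comm]
    refine Finset.sum_congr rfl fun x _ => Finset.sum_congr rfl fun y _ => ?_
    congr 1
    simp only [eq_iff_iff]
    tauto
  have hsum : Npair T s s + Npair T s s
      = ∑ x : Fin n, ∑ y : Fin n, if x ≠ y ∧ T x = s ∧ T y = s then 1 else 0 := by
    nth_rewrite 2 [h2]
    rw [Npair, ← Finset.sum_add_distrib]
    refine Finset.sum_congr rfl fun x _ => ?_
    rw [← Finset.sum_add_distrib]
    refine Finset.sum_congr rfl fun y _ => ?_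
    rcases lt_trichotomy x y with h | h | h
    · simp [h, not_lt_of_gt h, ne_of_lt h]
    · simp [h]
    · simp [h, not_lt_of_gt h, (ne_of_lt h).symm]
  have hdiag : (∑ x : Fin n, ∑ y : Fin n, if x ≠ y ∧ T x = s ∧ T y = s then 1 else 0)
      + cnt T s = cnt T s * cnt T s := by
    rw [cnt, Finset.sum_mul_sum]
    rw [← Finset.sum_add_distrib]
    refine Finset.sum_congr rfl fun x _ => ?_
    have hy : ∀ y : Fin n, (if T x = s then 1 else 0) * (if T y = s then 1 else 0)
        = (if x ≠ y ∧ T x = s ∧ T y = s then 1 else 0)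
          + (if x = y then (if T x = s ∧ T y = s then 1 else 0) else 0) := by
      intro y
      by_cases hxy : x = y <;> by_cases h1 : T x = s <;> by_cases h2' : T y = s <;>
        simp [hxy, h1, h2']
    simp only [hy]
    rw [Finset.sum_add_distrib, Finset.sum_ite_eq]
    simp
  have hm : cnt T s * (cnt T s - 1) = cnt T s * cnt T s - cnt T s := by
    cases h : cnt T s with
    | zero => simp
    | succ m => simp [Nat.succ_sub_one]; ring_nf; omega
  omega

def chi (T : Fin n → Bool × Bool) (s : Bool × Bool) (x : Fin n) : ℕ :=
  if T x = s then 1 else 0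

lemma fac1 (A : Fin n → Fin n → ℕ) (h k : Fin n → ℕ) :
    (∑ p, ∑ q, ∑ r, ∑ s, A p q * h r * k s)
      = (∑ p, ∑ q, A p q) * ((∑ r, h r) * (∑ s, k s)) := by
  simp only [mul_assoc, ← Finset.mul_sum, ← Finset.sum_mul]
lemma fac2 (A : Fin n → Fin n → ℕ) (h k : Fin n → ℕ) :
    (∑ p, ∑ q, ∑ r, ∑ s, A q r * h p * k s)
      = (∑ p, h p) * ((∑ q, ∑ r, A q r) * (∑ s, k s)) := by
  simp only [mul_assoc, mul_comm, mul_left_comm, ← Finset.mul_sum, ← Finset.sum_mul]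
lemma fac3 (A : Fin n → Fin n → ℕ) (h k : Fin n → ℕ) :
    (∑ p, ∑ q, ∑ r, ∑ s, A r s * h p * k q)
      = (∑ p, h p) * ((∑ q, k q) * (∑ r, ∑ s, A r s)) := by
  simp only [mul_assoc, mul_comm, mul_left_comm, ← Finset.mul_sum, ← Finset.sum_mul]
lemma fac4 (A : Fin n → Fin n → ℕ) (h k : Fin n → ℕ) :
    (∑ p, ∑ q, ∑ r, ∑ s, A p s * h q * k r)
      = (∑ q, h q) * ((∑ r, k r) * (∑ p, ∑ s, A p s)) := by
  simp only [mul_assoc, mul_comm, mul_left_comm, ← Finset.mul_sum, ← Finset.sum_mul]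

lemma sum_chi_pair (T : Fin n → Bool × Bool) (s t : Bool × Bool) :
    (∑ x : Fin n, ∑ y : Fin n, chi T s x * chi T t y * (if x < y then 1 else 0))
      = Npair T s t := by
  refine Finset.sum_congr rfl fun x _ => Finset.sum_congr rfl fun y _ => ?_
  unfold chi
  by_cases h1 : T x = s <;> by_cases h2 : T y = t <;> by_cases h3 : x < y <;>
    simp [h1, h2, h3]

lemma quad (T : Fin n → Bool × Bool) :
    cnt T (true,false) * cnt T (true,true) * (cnt T (false,true) * cnt T (false,false))
    ≤ cnt T (false,true) * cnt T (false,false) * Npair T (true,true) (true,false)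
      + cnt T (true,false) * cnt T (false,false) * Npair T (false,true) (true,true)
      + cnt T (true,false) * cnt T (true,true) * Npair T (false,false) (false,true)
      + cnt T (true,true) * cnt T (false,true) * Npair T (true,false) (false,false) := by
  have key : (∑ p : Fin n, ∑ q : Fin n, ∑ r : Fin n, ∑ s : Fin n,
        (chi T (true,false) p * chi T (true,true) q) * chi T (false,true) r * chi T (false,false) s)
      ≤ (∑ p : Fin n, ∑ q : Fin n, ∑ r : Fin n, ∑ s : Fin n,
          (chi T (true,true) q * chi T (true,false) p * (if q < p then 1 else 0)) * chi T (false,true) r * chi T (false,false) s)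
        + ((∑ p : Fin n, ∑ q : Fin n, ∑ r : Fin n, ∑ s : Fin n,
          (chi T (false,true) r * chi T (true,true) q * (if r < q then 1 else 0)) * chi T (true,false) p * chi T (false,false) s)
        + ((∑ p : Fin n, ∑ q : Fin n, ∑ r : Fin n, ∑ s : Fin n,
          (chi T (false,false) s * chi T (false,true) r * (if s < r then 1 else 0)) * chi T (true,false) p * chi T (true,true) q)
        + (∑ p : Fin n, ∑ q : Fin n, ∑ r : Fin n, ∑ s : Fin n,
          (chi T (true,false) p * chi T (false,false) s * (if p < s then 1 else 0)) * chi T (true,true) q * chi T (false,true) r))) := by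
    simp only [← Finset.sum_add_distrib]
    refine Finset.sum_le_sum fun p _ => Finset.sum_le_sum fun q _ =>
      Finset.sum_le_sum fun r _ => Finset.sum_le_sum fun s _ => ?_
    unfold chi
    by_cases h1 : T p = (true,false) <;> by_cases h2 : T q = (true,true) <;>
      by_cases h3 : T r = (false,true) <;> by_cases h4 : T s = (false,false) <;>
      simp [h1, h2, h3, h4]
    have hor : q < p ∨ r < q ∨ s < r ∨ p < s := by
      by_contra hcon
      push_neg at hcon
      obtain ⟨c1, c2, c3, c4⟩ := hcon
      have hpq : p < q := c1.lt_of_ne (fun e => by rw [e] at h1; rw [h1] at h2; exact absurd h2 (by decide))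
      have hqr : q < r := c2.lt_of_ne (fun e => by rw [e] at h2; rw [h2] at h3; exact absurd h3 (by decide))
      have hrs : r < s := c3.lt_of_ne (fun e => by rw [e] at h3; rw [h3] at h4; exact absurd h4 (by decide))
      have hsp : s < p := c4.lt_of_ne (fun e => by rw [e] at h4; rw [h4] at h1; exact absurd h1 (by decide))
      exact absurd (hpq.trans (hqr.trans (hrs.trans hsp))) (lt_irrefl p)
    rcases hor with h | h | h | h
    · rw [if_pos h]; exact Nat.le_add_right 1 _
    · rw [if_pos h]
      exact le_add_of_nonneg_of_le (Nat.zero_le _) (Nat.le_add_right 1 _)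
    · rw [if_pos h]
      exact le_add_of_nonneg_of_le (Nat.zero_le _)
        (le_add_of_nonneg_of_le (Nat.zero_le _) (Nat.le_add_right 1 _))
    · rw [if_pos h]
      exact le_add_of_nonneg_of_le (Nat.zero_le _)
        (le_add_of_nonneg_of_le (Nat.zero_le _) (Nat.le_add_left 1 _))
  have e0 := fac1 (fun p q => chi T (true,false) p * chi T (true,true) q)
    (chi T (false,true)) (chi T (false,false))
  have e1 := fac1 (fun p q => chi T (true,true) q * chi T (true,false) p * (if q < p then 1 else 0))
    (chi T (false,true)) (chi T (false,false))
  have e2 := fac2 (fun q r => chi T (false,true) r * chi T (true,true) q * (if r < q then 1 else 0))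
    (chi T (true,false)) (chi T (false,false))
  have e3 := fac3 (fun r s => chi T (false,false) s * chi T (false,true) r * (if s < r then 1 else 0))
    (chi T (true,false)) (chi T (true,true))
  have e4 := fac4 (fun p s => chi T (true,false) p * chi T (false,false) s * (if p < s then 1 else 0))
    (chi T (true,true)) (chi T (false,true))
  rw [e0, e1, e2, e3, e4] at key
  have p1 : (∑ p : Fin n, ∑ q : Fin n, chi T (true,true) q * chi T (true,false) p * (if q < p then 1 else 0))
      = Npair T (true,true) (true,false) := by
    rw [Finset.sum_comm]; exact sum_chi_pair T (true,true) (true,false)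
  have p2 : (∑ q : Fin n, ∑ r : Fin n, chi T (false,true) r * chi T (true,true) q * (if r < q then 1 else 0))
      = Npair T (false,true) (true,true) := by
    rw [Finset.sum_comm]; exact sum_chi_pair T (false,true) (true,true)
  have p3 : (∑ r : Fin n, ∑ s : Fin n, chi T (false,false) s * chi T (false,true) r * (if s < r then 1 else 0))
      = Npair T (false,false) (false,true) := by
    rw [Finset.sum_comm]; exact sum_chi_pair T (false,false) (false,true)
  have p4 : (∑ p : Fin n, ∑ s : Fin n, chi T (true,false) p * chi T (false,false) s * (if p < s then 1 else 0))
      = Npair T (true,false) (false,false) := sum_chi_pair T (true,false) (false,false)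
  have p0 : (∑ p : Fin n, ∑ q : Fin n, chi T (true,false) p * chi T (true,true) q)
      = cnt T (true,false) * cnt T (true,true) := (Finset.sum_mul_sum _ _ _ _).symm
  rw [p0, p1, p2, p3, p4] at key
  have hc : ∀ s : Bool × Bool, (∑ x : Fin n, chi T s x) = cnt T s := fun _ => rfl
  simp only [hc] at key
  calc cnt T (true,false) * cnt T (true,true) * (cnt T (false,true) * cnt T (false,false))
      ≤ _ := key
    _ = _ := by ring
lemma min_le_sumL (CA AD DB BC L1 L2 L3 L4 : ℕ)
    (hprod : CA * DB = AD * BC)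
    (h : CA * DB ≤ DB * L1 + BC * L2 + CA * L3 + AD * L4) :
    min (min CA AD) (min DB BC) ≤ L1 + L2 + L3 + L4 := by
  have main : ∀ M : ℕ, DB ≤ M → BC ≤ M → CA ≤ M → AD ≤ M →
      CA * DB ≤ M * (L1 + L2 + L3 + L4) := by
    intro M h1 h2 h3 h4
    calc CA * DB ≤ DB * L1 + BC * L2 + CA * L3 + AD * L4 := h
      _ ≤ M * L1 + M * L2 + M * L3 + M * L4 := by
          gcongr <;> assumption
      _ = M * (L1 + L2 + L3 + L4) := by ring
  set M := max (max CA AD) (max DB BC) with hM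
  have hbounds : DB ≤ M ∧ BC ≤ M ∧ CA ≤ M ∧ AD ≤ M := by omega
  have hMcases : M = CA ∨ M = AD ∨ M = DB ∨ M = BC := by omega
  have hmain := main M hbounds.1 hbounds.2.1 hbounds.2.2.1 hbounds.2.2.2
  rcases hMcases with hc | hc | hc | hc
  · rcases Nat.eq_zero_or_pos CA with h0 | h0
    · omega
    · rw [hc] at hmain
      have : DB ≤ L1 + L2 + L3 + L4 := Nat.le_of_mul_le_mul_left hmain h0
      omega
  · rcases Nat.eq_zero_or_pos AD with h0 | h0
    · omega
    · rw [hc, hprod] at hmain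
      have : BC ≤ L1 + L2 + L3 + L4 := Nat.le_of_mul_le_mul_left hmain h0
      omega
  · rcases Nat.eq_zero_or_pos DB with h0 | h0
    · omega
    · rw [hc, Nat.mul_comm CA DB] at hmain
      have : CA ≤ L1 + L2 + L3 + L4 := Nat.le_of_mul_le_mul_left hmain h0
      omega
  · rcases Nat.eq_zero_or_pos BC with h0 | h0
    · omega
    · rw [hc, hprod, Nat.mul_comm AD BC] at hmain
      have : AD ≤ L1 + L2 + L3 + L4 := Nat.le_of_mul_le_mul_left hmain h0
      omega

lemma CT_le_CT (T T' : Fin n → Bool × Bool)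
    (hcnt : ∀ s, cnt T' s = cnt T s)
    (hle : Npair T' (true,true) (true,false) + Npair T' (false,true) (true,true)
         + Npair T' (false,false) (false,true) + Npair T' (true,false) (false,false)
      ≤ min (min (cnt T (true,false) * cnt T (true,true))
                 (cnt T (true,true) * cnt T (false,true)))
            (min (cnt T (false,true) * cnt T (false,false))
                 (cnt T (true,false) * cnt T (false,false)))) :
    CT T ≤ CT T' := by
  have harith := min_le_sumL (cnt T (true,false) * cnt T (true,true))
    (cnt T (true,true) * cnt T (false,true))
    (cnt T (false,true) * cnt T (false,false))
    (cnt T (true,false) * cnt T (false,false))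
    (Npair T (true,true) (true,false)) (Npair T (false,true) (true,true))
    (Npair T (false,false) (false,true)) (Npair T (true,false) (false,false))
    (by ring) (quad T)
  have hLL : Npair T' (true,true) (true,false) + Npair T' (false,true) (true,true)
      + Npair T' (false,false) (false,true) + Npair T' (true,false) (false,false)
    ≤ Npair T (true,true) (true,false) + Npair T (false,true) (true,true)
      + Npair T (false,false) (false,true) + Npair T (true,false) (false,false) :=
    le_trans hle harith
  have E1 := Npair_add_Npair T (s := (true,true)) (t := (false,false)) (by decide)
  have E2 := Npair_add_Npair T (s := (true,true)) (t := (false,true)) (by decide)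
  have E3 := Npair_add_Npair T (s := (true,false)) (t := (false,false)) (by decide)
  have E4 := Npair_add_Npair T (s := (true,false)) (t := (true,true)) (by decide)
  have E5 := Npair_add_Npair T (s := (false,true)) (t := (false,false)) (by decide)
  have F1 := Npair_add_Npair T' (s := (true,true)) (t := (false,false)) (by decide)
  have F2 := Npair_add_Npair T' (s := (true,true)) (t := (false,true)) (by decide)
  have F3 := Npair_add_Npair T' (s := (true,false)) (t := (false,false)) (by decide)
  have F4 := Npair_add_Npair T' (s := (true,false)) (t := (true,true)) (by decide)
  have F5 := Npair_add_Npair T' (s := (false,true)) (t := (false,false)) (by decide)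
  have S1 := two_Npair_self T (true,false)
  have S2 := two_Npair_self T (false,true)
  have G1 := two_Npair_self T' (true,false)
  have G2 := two_Npair_self T' (false,true)
  rw [hcnt, hcnt] at F1 F2 F3 F4 F5
  rw [hcnt] at G1 G2
  rw [← S1] at G1
  rw [← S2] at G2
  rw [CT_eq T, CT_eq T']
  omega

lemma adj_ll (k : ℕ) (i j : Fin (k+1)) : (CCk k).Adj (.inl i) (.inl j) ↔ i ≠ j := by
  simp [CCk, SimpleGraph.fromRel_adj, ccRel]
lemma adj_rr (k : ℕ) (i j : Fin (k+1)) : (CCk k).Adj (.inr i) (.inr j) ↔ i ≠ j := by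
  simp [CCk, SimpleGraph.fromRel_adj, ccRel]
lemma adj_lr (k : ℕ) (i j : Fin (k+1)) :
    (CCk k).Adj (.inl i) (.inr j) ↔ (j : ℕ) < (i : ℕ) := by
  simp [CCk, SimpleGraph.fromRel_adj, ccRel]
lemma adj_rl (k : ℕ) (i j : Fin (k+1)) :
    (CCk k).Adj (.inr j) (.inl i) ↔ (j : ℕ) < (i : ℕ) := by
  simp [CCk, SimpleGraph.fromRel_adj, ccRel]

def toCut (k : ℕ) (T : Fin (k+1) → Bool × Bool) : Finset (Fin (k+1) ⊕ Fin (k+1)) :=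
  Finset.univ.filter fun v => Sum.elim (fun i => (T i).1) (fun i => (T i).2) v = true

lemma mem_toCut_inl (k : ℕ) (T : Fin (k+1) → Bool × Bool) (i : Fin (k+1)) :
    Sum.inl i ∈ toCut k T ↔ (T i).1 = true := by simp [toCut]
lemma mem_toCut_inr (k : ℕ) (T : Fin (k+1) → Bool × Bool) (i : Fin (k+1)) :
    Sum.inr i ∈ toCut k T ↔ (T i).2 = true := by simp [toCut]


lemma cutSize_toCut (k : ℕ) (T : Fin (k+1) → Bool × Bool) :
    cutSize (CCk k) (toCut k T)
      = (∑ i : Fin (k+1), if (T i).1 = true then 1 else 0)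
          * (∑ i : Fin (k+1), if (T i).1 = false then 1 else 0)
        + (∑ i : Fin (k+1), if (T i).2 = true then 1 else 0)
          * (∑ i : Fin (k+1), if (T i).2 = false then 1 else 0)
        + CT T := by
  rw [cutSize, Finset.card_filter, Fintype.sum_prod_type]
  rw [Fintype.sum_sum_type]
  simp only [Fintype.sum_sum_type]
  rw [Finset.sum_add_distrib, Finset.sum_add_distrib]
  have h_ll : (∑ x : Fin (k+1), ∑ y : Fin (k+1),
        if (CCk k).Adj (Sum.inl x) (Sum.inl y) ∧ Sum.inl x ∈ toCut k T ∧ Sum.inl y ∉ toCut k T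
        then 1 else 0)
      = (∑ i : Fin (k+1), if (T i).1 = true then 1 else 0)
          * (∑ i : Fin (k+1), if (T i).1 = false then 1 else 0) := by
    rw [Finset.sum_mul_sum]
    refine Finset.sum_congr rfl fun x _ => Finset.sum_congr rfl fun y _ => ?_
    by_cases h1 : (T x).1 = true <;> by_cases h2 : (T y).1 = true
    · simp [adj_ll, mem_toCut_inl, h1, h2]
    · have hxy : x ≠ y := by rintro rfl; exact h2 h1
      simp [adj_ll, mem_toCut_inl, h1, h2, hxy]
    · simp [adj_ll, mem_toCut_inl, h1, h2]
    · simp [adj_ll, mem_toCut_inl, h1, h2]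
  have h_rr : (∑ x : Fin (k+1), ∑ y : Fin (k+1),
        if (CCk k).Adj (Sum.inr x) (Sum.inr y) ∧ Sum.inr x ∈ toCut k T ∧ Sum.inr y ∉ toCut k T
        then 1 else 0)
      = (∑ i : Fin (k+1), if (T i).2 = true then 1 else 0)
          * (∑ i : Fin (k+1), if (T i).2 = false then 1 else 0) := by
    rw [Finset.sum_mul_sum]
    refine Finset.sum_congr rfl fun x _ => Finset.sum_congr rfl fun y _ => ?_
    by_cases h1 : (T x).2 = true <;> by_cases h2 : (T y).2 = true
    · simp [adj_rr, mem_toCut_inr, h1, h2]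
    · have hxy : x ≠ y := by rintro rfl; exact h2 h1
      simp [adj_rr, mem_toCut_inr, h1, h2, hxy]
    · simp [adj_rr, mem_toCut_inr, h1, h2]
    · simp [adj_rr, mem_toCut_inr, h1, h2]
  have h_lr : (∑ x : Fin (k+1), ∑ y : Fin (k+1),
        if (CCk k).Adj (Sum.inl x) (Sum.inr y) ∧ Sum.inl x ∈ toCut k T ∧ Sum.inr y ∉ toCut k T
        then 1 else 0)
      = (∑ x : Fin (k+1), ∑ y : Fin (k+1),
          if x < y ∧ (T y).1 = true ∧ (T x).2 = false then 1 else 0) := by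
    rw [Finset.sum_comm]
    refine Finset.sum_congr rfl fun x _ => Finset.sum_congr rfl fun y _ => ?_
    by_cases h1 : (T y).1 = true <;> by_cases h2 : (T x).2 = true <;>
      by_cases h3 : (x : ℕ) < (y : ℕ) <;>
      simp [adj_lr, mem_toCut_inl, mem_toCut_inr, Fin.lt_def, h1, h2, h3]
  have h_rl : (∑ x : Fin (k+1), ∑ y : Fin (k+1),
        if (CCk k).Adj (Sum.inr x) (Sum.inl y) ∧ Sum.inr x ∈ toCut k T ∧ Sum.inl y ∉ toCut k T
        then 1 else 0)
      = (∑ x : Fin (k+1), ∑ y : Fin (k+1),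
          if x < y ∧ (T x).2 = true ∧ (T y).1 = false then 1 else 0) := by
    refine Finset.sum_congr rfl fun x _ => Finset.sum_congr rfl fun y _ => ?_
    by_cases h1 : (T x).2 = true <;> by_cases h2 : (T y).1 = true <;>
      by_cases h3 : (x : ℕ) < (y : ℕ) <;>
      simp [adj_rl, mem_toCut_inl, mem_toCut_inr, Fin.lt_def, h1, h2, h3]
  rw [h_ll, h_rr, h_lr, h_rl]
  have hcross : (∑ x : Fin (k+1), ∑ y : Fin (k+1),
        if x < y ∧ (T y).1 = true ∧ (T x).2 = false then 1 else 0)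
      + (∑ x : Fin (k+1), ∑ y : Fin (k+1),
          if x < y ∧ (T x).2 = true ∧ (T y).1 = false then 1 else 0) = CT T := by
    rw [CT, ← Finset.sum_add_distrib]
    refine Finset.sum_congr rfl fun x _ => ?_
    rw [← Finset.sum_add_distrib]
    refine Finset.sum_congr rfl fun y _ => ?_
    by_cases h1 : (T y).1 = true <;> by_cases h2 : (T x).2 = true <;>
      by_cases h3 : x < y <;> simp [h1, h2, h3]
  omega

lemma fst_true_count (T : Fin n → Bool × Bool) :
    (∑ i : Fin n, if (T i).1 = true then 1 else 0)
      = cnt T (true,true) + cnt T (true,false) := by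
  rw [cnt, cnt, ← Finset.sum_add_distrib]
  refine Finset.sum_congr rfl fun i _ => ?_
  rcases h : T i with ⟨b1, b2⟩
  cases b1 <;> cases b2 <;> simp [h, Prod.ext_iff]

lemma fst_false_count (T : Fin n → Bool × Bool) :
    (∑ i : Fin n, if (T i).1 = false then 1 else 0)
      = cnt T (false,true) + cnt T (false,false) := by
  rw [cnt, cnt, ← Finset.sum_add_distrib]
  refine Finset.sum_congr rfl fun i _ => ?_
  rcases h : T i with ⟨b1, b2⟩
  cases b1 <;> cases b2 <;> simp [h, Prod.ext_iff]

lemma snd_true_count (T : Fin n → Bool × Bool) :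
    (∑ i : Fin n, if (T i).2 = true then 1 else 0)
      = cnt T (true,true) + cnt T (false,true) := by
  rw [cnt, cnt, ← Finset.sum_add_distrib]
  refine Finset.sum_congr rfl fun i _ => ?_
  rcases h : T i with ⟨b1, b2⟩
  cases b1 <;> cases b2 <;> simp [h, Prod.ext_iff]

lemma snd_false_count (T : Fin n → Bool × Bool) :
    (∑ i : Fin n, if (T i).2 = false then 1 else 0)
      = cnt T (true,false) + cnt T (false,false) := by
  rw [cnt, cnt, ← Finset.sum_add_distrib]
  refine Finset.sum_congr rfl fun i _ => ?_
  rcases h : T i with ⟨b1, b2⟩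
  cases b1 <;> cases b2 <;> simp [h, Prod.ext_iff]

lemma cnt_total (T : Fin n → Bool × Bool) :
    cnt T (true,true) + cnt T (false,false) + cnt T (true,false) + cnt T (false,true) = n := by
  rw [cnt, cnt, cnt, cnt, ← Finset.sum_add_distrib, ← Finset.sum_add_distrib,
    ← Finset.sum_add_distrib]
  have : ∀ i : Fin n, ((if T i = (true,true) then (1:ℕ) else 0)
      + (if T i = (false,false) then 1 else 0) + (if T i = (true,false) then 1 else 0)
      + (if T i = (false,true) then 1 else 0)) = 1 := by
    intro i
    rcases h : T i with ⟨b1, b2⟩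
    cases b1 <;> cases b2 <;> simp [h, Prod.ext_iff]
  rw [Finset.sum_congr rfl fun i _ => this i]
  simp
def blockT (n m1 m2 m3 : ℕ) (t1 t2 t3 t4 : Bool × Bool) (i : Fin n) : Bool × Bool :=
  if (i : ℕ) < m1 then t1 else if (i : ℕ) < m1 + m2 then t2
  else if (i : ℕ) < m1 + m2 + m3 then t3 else t4

section Block
variable {m1 m2 m3 : ℕ} {t1 t2 t3 t4 : Bool × Bool}
variable (h12 : t1 ≠ t2) (h13 : t1 ≠ t3) (h14 : t1 ≠ t4)
  (h23 : t2 ≠ t3) (h24 : t2 ≠ t4) (h34 : t3 ≠ t4)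

include h12 h13 h14 in
lemma blockT_eq1 (i : Fin n) :
    blockT n m1 m2 m3 t1 t2 t3 t4 i = t1 ↔ (i : ℕ) < m1 := by
  unfold blockT
  split_ifs with a b c
  · simp [a]
  · simp [Ne.symm h12, a]
  · simp [Ne.symm h13, a]
  · simp [Ne.symm h14, a]

include h12 h23 h24 in
lemma blockT_eq2 (i : Fin n) :
    blockT n m1 m2 m3 t1 t2 t3 t4 i = t2 ↔ m1 ≤ (i : ℕ) ∧ (i : ℕ) < m1 + m2 := by
  unfold blockT
  split_ifs with a b c
  · simp [h12]; omega
  · simp; omega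
  · simp [Ne.symm h23]; omega
  · simp [Ne.symm h24]; omega

include h13 h23 h34 in
lemma blockT_eq3 (i : Fin n) :
    blockT n m1 m2 m3 t1 t2 t3 t4 i = t3 ↔ m1 + m2 ≤ (i : ℕ) ∧ (i : ℕ) < m1 + m2 + m3 := by
  unfold blockT
  split_ifs with a b c
  · simp [h13]; omega
  · simp [h23]; omega
  · simp; omega
  · simp [Ne.symm h34]; omega

include h14 h24 h34 in
lemma blockT_eq4 (i : Fin n) :
    blockT n m1 m2 m3 t1 t2 t3 t4 i = t4 ↔ m1 + m2 + m3 ≤ (i : ℕ) := by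
  unfold blockT
  split_ifs with a b c
  · simp [h14]; omega
  · simp [h24]; omega
  · simp [h34]; omega
  · simp; omega

lemma sum_ite_interval (lo hi : ℕ) (hhi : hi ≤ n) :
    (∑ i : Fin n, if lo ≤ (i : ℕ) ∧ (i : ℕ) < hi then 1 else 0) = hi - lo := by
  rw [Fin.sum_univ_eq_sum_range (fun i => if lo ≤ i ∧ i < hi then 1 else 0) n]
  rw [← Finset.card_filter]
  have : (Finset.range n).filter (fun i => lo ≤ i ∧ i < hi) = Finset.Ico lo hi := by
    ext a
    simp only [Finset.mem_filter, Finset.mem_range, Finset.mem_Ico]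
    omega
  rw [this, Nat.card_Ico]
end Block

section Block2
variable {m1 m2 m3 m4 : ℕ} {t1 t2 t3 t4 : Bool × Bool}
variable (hn : m1 + m2 + m3 + m4 = n)
variable (h12 : t1 ≠ t2) (h13 : t1 ≠ t3) (h14 : t1 ≠ t4)
  (h23 : t2 ≠ t3) (h24 : t2 ≠ t4) (h34 : t3 ≠ t4)

include hn h12 h13 h14 in
lemma cnt_block1 : cnt (blockT n m1 m2 m3 t1 t2 t3 t4) t1 = m1 := by
  rw [cnt]
  have e : ∀ i : Fin n, (if blockT n m1 m2 m3 t1 t2 t3 t4 i = t1 then (1:ℕ) else 0)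
      = if 0 ≤ (i : ℕ) ∧ (i : ℕ) < m1 then 1 else 0 := fun i =>
    if_congr (by rw [blockT_eq1 h12 h13 h14]; omega) rfl rfl
  rw [Finset.sum_congr rfl fun i _ => e i, sum_ite_interval 0 m1 (by omega)]
  omega

include hn h12 h23 h24 in
lemma cnt_block2 : cnt (blockT n m1 m2 m3 t1 t2 t3 t4) t2 = m2 := by
  rw [cnt]
  have e : ∀ i : Fin n, (if blockT n m1 m2 m3 t1 t2 t3 t4 i = t2 then (1:ℕ) else 0)
      = if m1 ≤ (i : ℕ) ∧ (i : ℕ) < m1 + m2 then 1 else 0 := fun i =>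
    if_congr (blockT_eq2 h12 h23 h24 i) rfl rfl
  rw [Finset.sum_congr rfl fun i _ => e i, sum_ite_interval m1 (m1+m2) (by omega)]
  omega

include hn h13 h23 h34 in
lemma cnt_block3 : cnt (blockT n m1 m2 m3 t1 t2 t3 t4) t3 = m3 := by
  rw [cnt]
  have e : ∀ i : Fin n, (if blockT n m1 m2 m3 t1 t2 t3 t4 i = t3 then (1:ℕ) else 0)
      = if m1 + m2 ≤ (i : ℕ) ∧ (i : ℕ) < m1 + m2 + m3 then 1 else 0 := fun i =>
    if_congr (blockT_eq3 h13 h23 h34 i) rfl rfl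
  rw [Finset.sum_congr rfl fun i _ => e i, sum_ite_interval (m1+m2) (m1+m2+m3) (by omega)]
  omega

include hn h14 h24 h34 in
lemma cnt_block4 : cnt (blockT n m1 m2 m3 t1 t2 t3 t4) t4 = m4 := by
  rw [cnt]
  have e : ∀ i : Fin n, (if blockT n m1 m2 m3 t1 t2 t3 t4 i = t4 then (1:ℕ) else 0)
      = if m1 + m2 + m3 ≤ (i : ℕ) ∧ (i : ℕ) < n then 1 else 0 := fun i =>
    if_congr (by rw [blockT_eq4 h14 h24 h34]; have := i.isLt; omega) rfl rfl
  rw [Finset.sum_congr rfl fun i _ => e i, sum_ite_interval (m1+m2+m3) n (by omega)]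
  omega

include h12 h13 h14 h23 h24 h34 in
lemma Npair_block21 : Npair (blockT n m1 m2 m3 t1 t2 t3 t4) t2 t1 = 0 := by
  refine Finset.sum_eq_zero fun x _ => Finset.sum_eq_zero fun y _ => ?_
  rw [if_neg]
  rintro ⟨hxy, hx, hy⟩
  rw [blockT_eq2 h12 h23 h24] at hx
  rw [blockT_eq1 h12 h13 h14] at hy
  rw [Fin.lt_def] at hxy
  omega

include h12 h13 h14 h23 h24 h34 in
lemma Npair_block32 : Npair (blockT n m1 m2 m3 t1 t2 t3 t4) t3 t2 = 0 := by
  refine Finset.sum_eq_zero fun x _ => Finset.sum_eq_zero fun y _ => ?_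
  rw [if_neg]
  rintro ⟨hxy, hx, hy⟩
  rw [blockT_eq3 h13 h23 h34] at hx
  rw [blockT_eq2 h12 h23 h24] at hy
  rw [Fin.lt_def] at hxy
  omega

include h12 h13 h14 h23 h24 h34 in
lemma Npair_block43 : Npair (blockT n m1 m2 m3 t1 t2 t3 t4) t4 t3 = 0 := by
  refine Finset.sum_eq_zero fun x _ => Finset.sum_eq_zero fun y _ => ?_
  rw [if_neg]
  rintro ⟨hxy, hx, hy⟩
  rw [blockT_eq4 h14 h24 h34] at hx
  rw [blockT_eq3 h13 h23 h34] at hy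
  rw [Fin.lt_def] at hxy
  omega

include h12 h13 h14 h23 h24 h34 in
lemma blockT_convex (v : Bool × Bool) (a b c : Fin n) (hab : a ≤ b) (hbc : b ≤ c)
    (ha : blockT n m1 m2 m3 t1 t2 t3 t4 a = v)
    (hc : blockT n m1 m2 m3 t1 t2 t3 t4 c = v) :
    blockT n m1 m2 m3 t1 t2 t3 t4 b = v := by
  rw [Fin.le_def] at hab hbc
  have hv : v = t1 ∨ v = t2 ∨ v = t3 ∨ v = t4 := by
    unfold blockT at ha
    split_ifs at ha <;> tauto
  rcases hv with rfl | rfl | rfl | rfl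
  · rw [blockT_eq1 h12 h13 h14] at ha hc ⊢
    omega
  · rw [blockT_eq2 h12 h23 h24] at ha hc ⊢
    omega
  · rw [blockT_eq3 h13 h23 h34] at ha hc ⊢
    omega
  · rw [blockT_eq4 h14 h24 h34] at ha hc ⊢
    omega
end Block2

end CCkAux

lemma rowType_toCut (k : ℕ) (T : Fin (k+1) → Bool × Bool) (i : Fin (k+1)) :
    rowType k (CCkAux.toCut k T) i = T i := by
  rcases h : T i with ⟨b1, b2⟩
  cases b1 <;> cases b2 <;>
    simp [rowType, CCkAux.mem_toCut_inl, CCkAux.mem_toCut_inr, h]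

/-- `CC_k` has a maximum cut `S` such that for each of the four row types the set of
indices whose row has that type is an interval of consecutive integers (equivalently, it is
convex: it contains every index lying between two indices of that type). -/
theorem CCk_exists_max_cut_with_interval_blocks (k : ℕ) :
    ∃ S : Finset (Fin (k+1) ⊕ Fin (k+1)),
      cutSize (CCk k) S = maxCut (CCk k) ∧
      ∀ t : Bool × Bool, ∀ a b c : Fin (k+1), a ≤ b → b ≤ c →
        rowType k S a = t → rowType k S c = t → rowType k S b = t := by
  classical
  obtain ⟨S₀, hS₀mem, hS₀⟩ := Finset.exists_mem_eq_sup
    (Finset.univ.powerset : Finset (Finset (Fin (k+1) ⊕ Fin (k+1))))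
    ⟨∅, by simp⟩ (fun S => cutSize (CCk k) S)
  set T₀ : Fin (k+1) → Bool × Bool :=
    fun i => (decide (Sum.inl i ∈ S₀), decide (Sum.inr i ∈ S₀)) with hT₀def
  have hcut0 : CCkAux.toCut k T₀ = S₀ := by
    ext v
    rcases v with i | i <;> simp [CCkAux.mem_toCut_inl, CCkAux.mem_toCut_inr, hT₀def]
  set na := CCkAux.cnt T₀ (true,true) with hna
  set nb := CCkAux.cnt T₀ (false,false) with hnb
  set nc := CCkAux.cnt T₀ (true,false) with hnc
  set nd := CCkAux.cnt T₀ (false,true) with hnd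
  have htot : na + nb + nc + nd = k + 1 := CCkAux.cnt_total T₀
  have hmincases : min (min (nc*na) (na*nd)) (min (nd*nb) (nc*nb)) = nc*na
      ∨ min (min (nc*na) (na*nd)) (min (nd*nb) (nc*nb)) = na*nd
      ∨ min (min (nc*na) (na*nd)) (min (nd*nb) (nc*nb)) = nd*nb
      ∨ min (min (nc*na) (na*nd)) (min (nd*nb) (nc*nb)) = nc*nb := by omega
  rcases hmincases with hmin | hmin | hmin | hmin

  · -- case min4 = nc*na
    set T₁ := CCkAux.blockT (k+1) na nd nb (true,true) (false,true) (false,false) (true,false) with hT₁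
    have hn' : na + nd + nb + nc = k+1 := by omega
    have hc1 : CCkAux.cnt T₁ (true,true) = na :=
      CCkAux.cnt_block1 hn' (by decide) (by decide) (by decide)
    have hc2 : CCkAux.cnt T₁ (false,true) = nd :=
      CCkAux.cnt_block2 hn' (by decide) (by decide) (by decide)
    have hc3 : CCkAux.cnt T₁ (false,false) = nb :=
      CCkAux.cnt_block3 hn' (by decide) (by decide) (by decide)
    have hc4 : CCkAux.cnt T₁ (true,false) = nc :=
      CCkAux.cnt_block4 hn' (by decide) (by decide) (by decide)
    have hcnt : ∀ s, CCkAux.cnt T₁ s = CCkAux.cnt T₀ s := by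
      intro s
      rcases s with ⟨b1, b2⟩
      cases b1 <;> cases b2 <;> assumption
    have hz1 : CCkAux.Npair T₁ (false,true) (true,true) = 0 :=
      CCkAux.Npair_block21 (by decide) (by decide) (by decide) (by decide) (by decide) (by decide)
    have hz2 : CCkAux.Npair T₁ (false,false) (false,true) = 0 :=
      CCkAux.Npair_block32 (by decide) (by decide) (by decide) (by decide) (by decide) (by decide)
    have hz3 : CCkAux.Npair T₁ (true,false) (false,false) = 0 :=
      CCkAux.Npair_block43 (by decide) (by decide) (by decide) (by decide) (by decide) (by decide)
    have hbpair := CCkAux.Npair_add_Npair T₁ (s := (true,true)) (t := (true,false)) (by decide)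
    rw [hc1, hc4] at hbpair
    have hcomm : na*nc = nc*na := Nat.mul_comm _ _
    have hle : CCkAux.Npair T₁ (true,true) (true,false) + CCkAux.Npair T₁ (false,true) (true,true)
        + CCkAux.Npair T₁ (false,false) (false,true) + CCkAux.Npair T₁ (true,false) (false,false)
        ≤ min (min (nc*na) (na*nd)) (min (nd*nb) (nc*nb)) := by
      omega
    rw [hna, hnb, hnc, hnd] at hle
    have hCT : CCkAux.CT T₀ ≤ CCkAux.CT T₁ := CCkAux.CT_le_CT T₀ T₁ hcnt hle
    refine ⟨CCkAux.toCut k T₁, ?_, ?_⟩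
    · have hf1 := CCkAux.cutSize_toCut k T₀
      have hf2 := CCkAux.cutSize_toCut k T₁
      rw [CCkAux.fst_true_count, CCkAux.fst_false_count, CCkAux.snd_true_count,
        CCkAux.snd_false_count] at hf1 hf2
      simp only [hcnt] at hf2
      have hge : cutSize (CCk k) S₀ ≤ cutSize (CCk k) (CCkAux.toCut k T₁) := by
        rw [← hcut0, hf1, hf2]
        omega
      have hle2 : cutSize (CCk k) (CCkAux.toCut k T₁) ≤ maxCut (CCk k) := by
        rw [maxCut]
        exact Finset.le_sup (Finset.mem_powerset.mpr (Finset.subset_univ _))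
      have hge2 : maxCut (CCk k) ≤ cutSize (CCk k) (CCkAux.toCut k T₁) := by
        rw [maxCut, hS₀]; exact hge
      omega
    · intro t x y z hxy hyz hx hz
      rw [rowType_toCut] at hx hz ⊢
      exact CCkAux.blockT_convex (by decide) (by decide) (by decide) (by decide) (by decide)
        (by decide) t x y z hxy hyz hx hz

  · -- case min4 = na*nd
    set T₁ := CCkAux.blockT (k+1) nd nb nc (false,true) (false,false) (true,false) (true,true) with hT₁
    have hn' : nd + nb + nc + na = k+1 := by omega
    have hc1 : CCkAux.cnt T₁ (false,true) = nd :=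
      CCkAux.cnt_block1 hn' (by decide) (by decide) (by decide)
    have hc2 : CCkAux.cnt T₁ (false,false) = nb :=
      CCkAux.cnt_block2 hn' (by decide) (by decide) (by decide)
    have hc3 : CCkAux.cnt T₁ (true,false) = nc :=
      CCkAux.cnt_block3 hn' (by decide) (by decide) (by decide)
    have hc4 : CCkAux.cnt T₁ (true,true) = na :=
      CCkAux.cnt_block4 hn' (by decide) (by decide) (by decide)
    have hcnt : ∀ s, CCkAux.cnt T₁ s = CCkAux.cnt T₀ s := by
      intro s
      rcases s with ⟨b1, b2⟩
      cases b1 <;> cases b2 <;> assumption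
    have hz1 : CCkAux.Npair T₁ (false,false) (false,true) = 0 :=
      CCkAux.Npair_block21 (by decide) (by decide) (by decide) (by decide) (by decide) (by decide)
    have hz2 : CCkAux.Npair T₁ (true,false) (false,false) = 0 :=
      CCkAux.Npair_block32 (by decide) (by decide) (by decide) (by decide) (by decide) (by decide)
    have hz3 : CCkAux.Npair T₁ (true,true) (true,false) = 0 :=
      CCkAux.Npair_block43 (by decide) (by decide) (by decide) (by decide) (by decide) (by decide)
    have hbpair := CCkAux.Npair_add_Npair T₁ (s := (false,true)) (t := (true,true)) (by decide)
    rw [hc1, hc4] at hbpair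
    have hcomm : nd*na = na*nd := Nat.mul_comm _ _
    have hle : CCkAux.Npair T₁ (true,true) (true,false) + CCkAux.Npair T₁ (false,true) (true,true)
        + CCkAux.Npair T₁ (false,false) (false,true) + CCkAux.Npair T₁ (true,false) (false,false)
        ≤ min (min (nc*na) (na*nd)) (min (nd*nb) (nc*nb)) := by
      omega
    rw [hna, hnb, hnc, hnd] at hle
    have hCT : CCkAux.CT T₀ ≤ CCkAux.CT T₁ := CCkAux.CT_le_CT T₀ T₁ hcnt hle
    refine ⟨CCkAux.toCut k T₁, ?_, ?_⟩
    · have hf1 := CCkAux.cutSize_toCut k T₀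
      have hf2 := CCkAux.cutSize_toCut k T₁
      rw [CCkAux.fst_true_count, CCkAux.fst_false_count, CCkAux.snd_true_count,
        CCkAux.snd_false_count] at hf1 hf2
      simp only [hcnt] at hf2
      have hge : cutSize (CCk k) S₀ ≤ cutSize (CCk k) (CCkAux.toCut k T₁) := by
        rw [← hcut0, hf1, hf2]
        omega
      have hle2 : cutSize (CCk k) (CCkAux.toCut k T₁) ≤ maxCut (CCk k) := by
        rw [maxCut]
        exact Finset.le_sup (Finset.mem_powerset.mpr (Finset.subset_univ _))
      have hge2 : maxCut (CCk k) ≤ cutSize (CCk k) (CCkAux.toCut k T₁) := by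
        rw [maxCut, hS₀]; exact hge
      omega
    · intro t x y z hxy hyz hx hz
      rw [rowType_toCut] at hx hz ⊢
      exact CCkAux.blockT_convex (by decide) (by decide) (by decide) (by decide) (by decide)
        (by decide) t x y z hxy hyz hx hz

  · -- case min4 = nd*nb
    set T₁ := CCkAux.blockT (k+1) nb nc na (false,false) (true,false) (true,true) (false,true) with hT₁
    have hn' : nb + nc + na + nd = k+1 := by omega
    have hc1 : CCkAux.cnt T₁ (false,false) = nb :=
      CCkAux.cnt_block1 hn' (by decide) (by decide) (by decide)
    have hc2 : CCkAux.cnt T₁ (true,false) = nc :=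
      CCkAux.cnt_block2 hn' (by decide) (by decide) (by decide)
    have hc3 : CCkAux.cnt T₁ (true,true) = na :=
      CCkAux.cnt_block3 hn' (by decide) (by decide) (by decide)
    have hc4 : CCkAux.cnt T₁ (false,true) = nd :=
      CCkAux.cnt_block4 hn' (by decide) (by decide) (by decide)
    have hcnt : ∀ s, CCkAux.cnt T₁ s = CCkAux.cnt T₀ s := by
      intro s
      rcases s with ⟨b1, b2⟩
      cases b1 <;> cases b2 <;> assumption
    have hz1 : CCkAux.Npair T₁ (true,false) (false,false) = 0 :=
      CCkAux.Npair_block21 (by decide) (by decide) (by decide) (by decide) (by decide) (by decide)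
    have hz2 : CCkAux.Npair T₁ (true,true) (true,false) = 0 :=
      CCkAux.Npair_block32 (by decide) (by decide) (by decide) (by decide) (by decide) (by decide)
    have hz3 : CCkAux.Npair T₁ (false,true) (true,true) = 0 :=
      CCkAux.Npair_block43 (by decide) (by decide) (by decide) (by decide) (by decide) (by decide)
    have hbpair := CCkAux.Npair_add_Npair T₁ (s := (false,false)) (t := (false,true)) (by decide)
    rw [hc1, hc4] at hbpair
    have hcomm : nb*nd = nd*nb := Nat.mul_comm _ _
    have hle : CCkAux.Npair T₁ (true,true) (true,false) + CCkAux.Npair T₁ (false,true) (true,true)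
        + CCkAux.Npair T₁ (false,false) (false,true) + CCkAux.Npair T₁ (true,false) (false,false)
        ≤ min (min (nc*na) (na*nd)) (min (nd*nb) (nc*nb)) := by
      omega
    rw [hna, hnb, hnc, hnd] at hle
    have hCT : CCkAux.CT T₀ ≤ CCkAux.CT T₁ := CCkAux.CT_le_CT T₀ T₁ hcnt hle
    refine ⟨CCkAux.toCut k T₁, ?_, ?_⟩
    · have hf1 := CCkAux.cutSize_toCut k T₀
      have hf2 := CCkAux.cutSize_toCut k T₁
      rw [CCkAux.fst_true_count, CCkAux.fst_false_count, CCkAux.snd_true_count,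
        CCkAux.snd_false_count] at hf1 hf2
      simp only [hcnt] at hf2
      have hge : cutSize (CCk k) S₀ ≤ cutSize (CCk k) (CCkAux.toCut k T₁) := by
        rw [← hcut0, hf1, hf2]
        omega
      have hle2 : cutSize (CCk k) (CCkAux.toCut k T₁) ≤ maxCut (CCk k) := by
        rw [maxCut]
        exact Finset.le_sup (Finset.mem_powerset.mpr (Finset.subset_univ _))
      have hge2 : maxCut (CCk k) ≤ cutSize (CCk k) (CCkAux.toCut k T₁) := by
        rw [maxCut, hS₀]; exact hge
      omega
    · intro t x y z hxy hyz hx hz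
      rw [rowType_toCut] at hx hz ⊢
      exact CCkAux.blockT_convex (by decide) (by decide) (by decide) (by decide) (by decide)
        (by decide) t x y z hxy hyz hx hz

  · -- case min4 = nc*nb
    set T₁ := CCkAux.blockT (k+1) nc na nd (true,false) (true,true) (false,true) (false,false) with hT₁
    have hn' : nc + na + nd + nb = k+1 := by omega
    have hc1 : CCkAux.cnt T₁ (true,false) = nc :=
      CCkAux.cnt_block1 hn' (by decide) (by decide) (by decide)
    have hc2 : CCkAux.cnt T₁ (true,true) = na :=
      CCkAux.cnt_block2 hn' (by decide) (by decide) (by decide)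
    have hc3 : CCkAux.cnt T₁ (false,true) = nd :=
      CCkAux.cnt_block3 hn' (by decide) (by decide) (by decide)
    have hc4 : CCkAux.cnt T₁ (false,false) = nb :=
      CCkAux.cnt_block4 hn' (by decide) (by decide) (by decide)
    have hcnt : ∀ s, CCkAux.cnt T₁ s = CCkAux.cnt T₀ s := by
      intro s
      rcases s with ⟨b1, b2⟩
      cases b1 <;> cases b2 <;> assumption
    have hz1 : CCkAux.Npair T₁ (true,true) (true,false) = 0 :=
      CCkAux.Npair_block21 (by decide) (by decide) (by decide) (by decide) (by decide) (by decide)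
    have hz2 : CCkAux.Npair T₁ (false,true) (true,true) = 0 :=
      CCkAux.Npair_block32 (by decide) (by decide) (by decide) (by decide) (by decide) (by decide)
    have hz3 : CCkAux.Npair T₁ (false,false) (false,true) = 0 :=
      CCkAux.Npair_block43 (by decide) (by decide) (by decide) (by decide) (by decide) (by decide)
    have hbpair := CCkAux.Npair_add_Npair T₁ (s := (true,false)) (t := (false,false)) (by decide)
    rw [hc1, hc4] at hbpair
    have hcomm : nc*nb = nc*nb := rfl
    have hle : CCkAux.Npair T₁ (true,true) (true,false) + CCkAux.Npair T₁ (false,true) (true,true)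
        + CCkAux.Npair T₁ (false,false) (false,true) + CCkAux.Npair T₁ (true,false) (false,false)
        ≤ min (min (nc*na) (na*nd)) (min (nd*nb) (nc*nb)) := by
      omega
    rw [hna, hnb, hnc, hnd] at hle
    have hCT : CCkAux.CT T₀ ≤ CCkAux.CT T₁ := CCkAux.CT_le_CT T₀ T₁ hcnt hle
    refine ⟨CCkAux.toCut k T₁, ?_, ?_⟩
    · have hf1 := CCkAux.cutSize_toCut k T₀
      have hf2 := CCkAux.cutSize_toCut k T₁
      rw [CCkAux.fst_true_count, CCkAux.fst_false_count, CCkAux.snd_true_count,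
        CCkAux.snd_false_count] at hf1 hf2
      simp only [hcnt] at hf2
      have hge : cutSize (CCk k) S₀ ≤ cutSize (CCk k) (CCkAux.toCut k T₁) := by
        rw [← hcut0, hf1, hf2]
        omega
      have hle2 : cutSize (CCk k) (CCkAux.toCut k T₁) ≤ maxCut (CCk k) := by
        rw [maxCut]
        exact Finset.le_sup (Finset.mem_powerset.mpr (Finset.subset_univ _))
      have hge2 : maxCut (CCk k) ≤ cutSize (CCk k) (CCkAux.toCut k T₁) := by
        rw [maxCut, hS₀]; exact hge
      omega
    · intro t x y z hxy hyz hx hz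
      rw [rowType_toCut] at hx hz ⊢
      exact CCkAux.blockT_convex (by decide) (by decide) (by decide) (by decide) (by decide)
        (by decide) t x y z hxy hyz hx hz
end

section
/- For every natural number k and all nonnegative integers x, y, z, t with x + y + z + t = k + 1, the cut size of the pattern cut S(x,y,z,t) in CC_k equals f(x,y,z,t) = (y+z)(x+t) + (x+y)(z+t) + y(y−1)/2 + t(t−1)/2 + xy + yz + xz + zt. -/
/-- The pattern cut `S(x,y,z,t)` of `CC_k` (for `x+y+z+t = k+1`): `v_i ∈ S` iff
`i < x` or `i ≥ x+y+z`, and `v'_j ∈ S` iff `j < x+y`. -/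
def patternCut (k x y z t : ℕ) : Finset (Fin (k+1) ⊕ Fin (k+1)) :=
  ((Finset.univ.filter fun i : Fin (k+1) => (i : ℕ) < x ∨ x + y + z ≤ (i : ℕ)).image Sum.inl) ∪
  ((Finset.univ.filter fun j : Fin (k+1) => (j : ℕ) < x + y).image Sum.inr)

open Finset

lemma mem_inl (k x y z t : ℕ) (i : Fin (k+1)) :
    Sum.inl i ∈ patternCut k x y z t ↔ ((i : ℕ) < x ∨ x + y + z ≤ (i : ℕ)) := by
  simp [patternCut]
lemma mem_inr (k x y z t : ℕ) (j : Fin (k+1)) :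
    Sum.inr j ∈ patternCut k x y z t ↔ ((j : ℕ) < x + y) := by
  simp [patternCut]
lemma adj_ll (k : ℕ) (i i' : Fin (k+1)) :
    (CCk k).Adj (Sum.inl i) (Sum.inl i') ↔ (i:ℕ) ≠ (i':ℕ) := by
  simp [CCk, ccRel, Fin.ext_iff]
lemma adj_lr (k : ℕ) (i j : Fin (k+1)) :
    (CCk k).Adj (Sum.inl i) (Sum.inr j) ↔ (j:ℕ) < (i:ℕ) := by
  simp [CCk, ccRel]
lemma adj_rl (k : ℕ) (j i : Fin (k+1)) :
    (CCk k).Adj (Sum.inr j) (Sum.inl i) ↔ (j:ℕ) < (i:ℕ) := by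
  simp [CCk, ccRel]
lemma adj_rr (k : ℕ) (j j' : Fin (k+1)) :
    (CCk k).Adj (Sum.inr j) (Sum.inr j') ↔ (j:ℕ) ≠ (j':ℕ) := by
  simp [CCk, ccRel, Fin.ext_iff]

lemma sum2 (n : ℕ) (f : ℕ → ℕ → ℕ) :
    ∑ i : Fin n, ∑ j : Fin n, f i j = ∑ i ∈ range n, ∑ j ∈ range n, f i j := by
  rw [Fin.sum_univ_eq_sum_range (fun a => ∑ j : Fin n, f a ↑j) n]
  exact Finset.sum_congr rfl fun i _ => Fin.sum_univ_eq_sum_range (f i) n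



lemma sum_ite_count (n : ℕ) (p : ℕ → Prop) [DecidablePred p] (s : Finset ℕ)
    (hs : ∀ a, a ∈ s ↔ a < n ∧ p a) :
    ∑ a ∈ Finset.range n, (if p a then 1 else 0) = s.card := by
  rw [← Finset.card_filter]
  congr 1
  ext a
  simp only [Finset.mem_filter, Finset.mem_range, hs]

-- L1
lemma L1 (n x y z t : ℕ) (h : x + y + z + t = n) :
    ∑ a ∈ range n, ∑ b ∈ range n,
      (if a ≠ b ∧ (a < x ∨ x + y + z ≤ a) ∧ ¬(b < x ∨ x + y + z ≤ b) then 1 else 0)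
      = (x + t) * (y + z) := by
  have key : ∀ a b : ℕ,
      (if a ≠ b ∧ (a < x ∨ x + y + z ≤ a) ∧ ¬(b < x ∨ x + y + z ≤ b) then 1 else 0)
      = (if (a < x ∨ x + y + z ≤ a) then 1 else 0) *
        (if ¬(b < x ∨ x + y + z ≤ b) then 1 else 0) := by
    intro a b; split_ifs <;> omega
  simp only [key]
  rw [← Finset.sum_mul_sum]
  rw [sum_ite_count n _ (range x ∪ Ico (x+y+z) n) (by intro a; simp [Finset.mem_union]; omega)]
  rw [sum_ite_count n _ (Ico x (x+y+z)) (by intro a; simp; omega)]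
  rw [Finset.card_union_of_disjoint (by simp [Finset.disjoint_left]; omega),
    Finset.card_range, Nat.card_Ico, Nat.card_Ico]
  congr 1 <;> omega

-- L4
lemma L4 (n x y z t : ℕ) (h : x + y + z + t = n) :
    ∑ a ∈ range n, ∑ b ∈ range n,
      (if a ≠ b ∧ a < x + y ∧ ¬(b < x + y) then 1 else 0)
      = (x + y) * (z + t) := by
  have key : ∀ a b : ℕ,
      (if a ≠ b ∧ a < x + y ∧ ¬(b < x + y) then 1 else 0)
      = (if a < x + y then 1 else 0) * (if ¬(b < x + y) then 1 else 0) := by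
    intro a b; split_ifs <;> omega
  simp only [key]
  rw [← Finset.sum_mul_sum]
  rw [sum_ite_count n _ (range (x+y)) (by intro a; simp; omega)]
  rw [sum_ite_count n _ (Ico (x+y) n) (by intro a; simp; omega)]
  rw [Finset.card_range, Nat.card_Ico]
  congr 1; omega
-- L2 : inl-inr count
lemma L2 (n x y z t : ℕ) (h : x + y + z + t = n) :
    ∑ a ∈ range n, ∑ b ∈ range n,
      (if b < a ∧ (a < x ∨ x + y + z ≤ a) ∧ ¬(b < x + y) then 1 else 0)
      = z * t + t * (t - 1) / 2 := by
  have inner : ∀ a ∈ range n,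
      (∑ b ∈ range n, (if b < a ∧ (a < x ∨ x + y + z ≤ a) ∧ ¬(b < x + y) then 1 else 0))
      = if x + y + z ≤ a then a - (x + y) else 0 := by
    intro a ha
    rw [mem_range] at ha
    by_cases hc : x + y + z ≤ a
    · rw [if_pos hc, sum_ite_count n _ (Ico (x+y) a) (by intro b; simp; omega), Nat.card_Ico]
    · rw [if_neg hc]
      apply Finset.sum_eq_zero
      intro b hb; rw [mem_range] at hb
      rw [if_neg]; omega
  rw [Finset.sum_congr rfl inner, ← Finset.sum_filter]
  have : (range n).filter (fun a => x + y + z ≤ a) = Ico (x+y+z) n := by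
    ext a; simp; omega
  rw [this, Finset.sum_Ico_eq_sum_range]
  have hn : n - (x + y + z) = t := by omega
  rw [hn]
  have : ∀ m ∈ range t, x + y + z + m - (x + y) = z + m := by intro m _; omega
  rw [Finset.sum_congr rfl this, Finset.sum_add_distrib, Finset.sum_const, Finset.card_range,
    Finset.sum_range_id]
  simp [mul_comm]

-- L3 : inr-inl count
lemma L3 (n x y z t : ℕ) (h : x + y + z + t = n) :
    ∑ b ∈ range n, ∑ a ∈ range n,
      (if b < a ∧ b < x + y ∧ ¬(a < x ∨ x + y + z ≤ a) then 1 else 0)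
      = x * y + y * (y - 1) / 2 + z * (x + y) := by
  rw [Finset.sum_comm]
  have inner : ∀ a ∈ range n,
      (∑ b ∈ range n, (if b < a ∧ b < x + y ∧ ¬(a < x ∨ x + y + z ≤ a) then 1 else 0))
      = if x ≤ a ∧ a < x + y + z then min a (x + y) else 0 := by
    intro a ha
    rw [mem_range] at ha
    by_cases hc : x ≤ a ∧ a < x + y + z
    · rw [if_pos hc, sum_ite_count n _ (range (min a (x+y))) (by intro b; simp; omega),
        Finset.card_range]
    · rw [if_neg hc]
      apply Finset.sum_eq_zero
      intro b hb; rw [mem_range] at hb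
      rw [if_neg]; omega
  rw [Finset.sum_congr rfl inner, ← Finset.sum_filter]
  have : (range n).filter (fun a => x ≤ a ∧ a < x + y + z) = Ico x (x+y+z) := by
    ext a; simp; omega
  rw [this, ← Finset.sum_Ico_consecutive _ (by omega : x ≤ x + y) (by omega : x + y ≤ x + y + z)]
  have e1 : ∑ a ∈ Ico x (x+y), min a (x+y) = x * y + y * (y-1) / 2 := by
    have : ∀ a ∈ Ico x (x+y), min a (x+y) = a := by intro a ha; simp at ha; omega
    rw [Finset.sum_congr rfl this, Finset.sum_Ico_eq_sum_range]
    have : x + y - x = y := by omega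
    rw [this, Finset.sum_add_distrib, Finset.sum_const, Finset.card_range, Finset.sum_range_id,
      smul_eq_mul, Nat.mul_comm y x]
  have e2 : ∑ a ∈ Ico (x+y) (x+y+z), min a (x+y) = z * (x+y) := by
    have : ∀ a ∈ Ico (x+y) (x+y+z), min a (x+y) = x + y := by intro a ha; simp at ha; omega
    rw [Finset.sum_congr rfl this, Finset.sum_const, Nat.card_Ico, smul_eq_mul]
    congr 1; omega
  rw [e1, e2]

/-- For `x+y+z+t = k+1`, the cut size of the pattern cut `S(x,y,z,t)` of `CC_k` equals
`f(x,y,z,t) = (y+z)(x+t) + (x+y)(z+t) + y(y−1)/2 + t(t−1)/2 + xy + yz + xz + zt`. -/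
theorem cutSize_patternCut (k x y z t : ℕ) (h : x + y + z + t = k + 1) :
    cutSize (CCk k) (patternCut k x y z t) =
      (y+z)*(x+t) + (x+y)*(z+t) + y*(y-1)/2 + t*(t-1)/2 + x*y + y*z + x*z + z*t := by
  rw [cutSize, Finset.card_filter, Fintype.sum_prod_type, Fintype.sum_sum_type]
  simp only [Fintype.sum_sum_type, mem_inl, mem_inr, adj_ll, adj_lr, adj_rl, adj_rr,
    Finset.sum_add_distrib]
  have e1 := sum2 (k+1) (fun a b => if a ≠ b ∧ (a < x ∨ x + y + z ≤ a) ∧ ¬(b < x ∨ x + y + z ≤ b) then 1 else 0)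
  have e2 := sum2 (k+1) (fun a b => if b < a ∧ (a < x ∨ x + y + z ≤ a) ∧ ¬(b < x + y) then 1 else 0)
  have e3 := sum2 (k+1) (fun b a => if b < a ∧ b < x + y ∧ ¬(a < x ∨ x + y + z ≤ a) then 1 else 0)
  have e4 := sum2 (k+1) (fun a b => if a ≠ b ∧ a < x + y ∧ ¬(b < x + y) then 1 else 0)
  rw [e1, e2, e3, e4]

  rw [L1 (k+1) x y z t h, L2 (k+1) x y z t h, L3 (k+1) x y z t h, L4 (k+1) x y z t h]
  generalize y * (y - 1) / 2 = A
  generalize t * (t - 1) / 2 = B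
  ring
end

section
/- For every natural number k, the maximum of f(x,y,z,t) = (y+z)(x+t) + (x+y)(z+t) + y(y−1)/2 + t(t−1)/2 + xy + yz + xz + zt over all nonnegative integers x, y, z, t with x + y + z + t = k + 1 equals ⌊(10k² + 18k + 9)/12⌋. -/
/-- `f(x,y,z,t) = (y+z)(x+t) + (x+y)(z+t) + y(y−1)/2 + t(t−1)/2 + xy + yz + xz + zt`.
(The divisions are exact, so natural-number division is faithful.) -/
def fpat (x y z t : ℕ) : ℕ :=
  (y+z)*(x+t) + (x+y)*(z+t) + y*(y-1)/2 + t*(t-1)/2 + x*y + y*z + x*z + z*t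

lemma fpat_half (n : ℕ) : 2 * (n * (n-1) / 2) + n = n * n := by
  obtain _ | m := n
  · simp
  · have h : 2 ∣ (m+1) * ((m+1)-1) := by
      simp only [Nat.add_sub_cancel]
      rw [Nat.mul_comm]
      exact (Nat.even_mul_succ_self m).two_dvd
    rw [Nat.mul_div_cancel' h]
    simp only [Nat.add_sub_cancel]
    ring

lemma fpat_key (x y z t : ℕ) :
    2 * fpat x y z t + y + t =
      2*((y+z)*(x+t) + (x+y)*(z+t) + x*y + y*z + x*z + z*t) + y*y + t*t := by
  have hy := fpat_half y
  have ht := fpat_half t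
  unfold fpat
  omega

lemma fpat_eq (x y z t m : ℕ)
    (h : 2*((y+z)*(x+t) + (x+y)*(z+t) + x*y + y*z + x*z + z*t) + y*y + t*t
        = 2*m + y + t) :
    fpat x y z t = m := by
  have := fpat_key x y z t
  omega

lemma div12 (m c : ℕ) (hc : c < 12) : (12*m + c)/12 = m := by omega

/-- The maximum of `f(x,y,z,t)` over all nonnegative integers with `x+y+z+t = k+1` equals
`⌊(10k² + 18k + 9)/12⌋`. -/
theorem fpat_max (k : ℕ) :
    IsGreatest {n : ℕ | ∃ x y z t : ℕ, x + y + z + t = k + 1 ∧ n = fpat x y z t}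
      ((10 * k^2 + 18 * k + 9) / 12) := by
  constructor
  · -- membership: exhibit a witness depending on k mod 6
    obtain ⟨q, r, hr, rfl⟩ : ∃ q r, r < 6 ∧ k = 6*q + r :=
      ⟨k/6, k%6, Nat.mod_lt _ (by norm_num), (Nat.div_add_mod k 6).symm⟩
    interval_cases r
    · refine ⟨2*q, 2*q, 2*q, 1, by ring, ?_⟩
      have hv : fpat (2*q) (2*q) (2*q) 1 = 30*q^2 + 9*q := fpat_eq _ _ _ _ _ (by ring)
      have hd : 10 * (6*q+0)^2 + 18 * (6*q+0) + 9 = 12*(30*q^2 + 9*q) + 9 := by ring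
      rw [hv, hd, div12 _ _ (by norm_num)]
    · refine ⟨2*q+1, 2*q, 2*q+1, 0, by ring, ?_⟩
      have hv : fpat (2*q+1) (2*q) (2*q+1) 0 = 30*q^2 + 19*q + 3 :=
        fpat_eq _ _ _ _ _ (by ring)
      have hd : 10 * (6*q+1)^2 + 18 * (6*q+1) + 9 = 12*(30*q^2 + 19*q + 3) + 1 := by ring
      rw [hv, hd, div12 _ _ (by norm_num)]
    · refine ⟨2*q+1, 2*q+1, 2*q+1, 0, by ring, ?_⟩
      have hv : fpat (2*q+1) (2*q+1) (2*q+1) 0 = 30*q^2 + 29*q + 7 :=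
        fpat_eq _ _ _ _ _ (by ring)
      have hd : 10 * (6*q+2)^2 + 18 * (6*q+2) + 9 = 12*(30*q^2 + 29*q + 7) + 1 := by ring
      rw [hv, hd, div12 _ _ (by norm_num)]
    · refine ⟨2*q+1, 2*q+1, 2*q+1, 1, by ring, ?_⟩
      have hv : fpat (2*q+1) (2*q+1) (2*q+1) 1 = 30*q^2 + 39*q + 12 :=
        fpat_eq _ _ _ _ _ (by ring)
      have hd : 10 * (6*q+3)^2 + 18 * (6*q+3) + 9 = 12*(30*q^2 + 39*q + 12) + 9 := by ring
      rw [hv, hd, div12 _ _ (by norm_num)]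
    · refine ⟨2*q+2, 2*q+1, 2*q+2, 0, by ring, ?_⟩
      have hv : fpat (2*q+2) (2*q+1) (2*q+2) 0 = 30*q^2 + 49*q + 20 :=
        fpat_eq _ _ _ _ _ (by ring)
      have hd : 10 * (6*q+4)^2 + 18 * (6*q+4) + 9 = 12*(30*q^2 + 49*q + 20) + 1 := by ring
      rw [hv, hd, div12 _ _ (by norm_num)]
    · refine ⟨2*q+2, 2*q+2, 2*q+2, 0, by ring, ?_⟩
      have hv : fpat (2*q+2) (2*q+2) (2*q+2) 0 = 30*q^2 + 59*q + 29 :=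
        fpat_eq _ _ _ _ _ (by ring)
      have hd : 10 * (6*q+5)^2 + 18 * (6*q+5) + 9 = 12*(30*q^2 + 59*q + 29) + 1 := by ring
      rw [hv, hd, div12 _ _ (by norm_num)]
  · -- upper bound
    rintro n ⟨x, y, z, t, hsum, rfl⟩
    rw [Nat.le_div_iff_mul_le (by norm_num : 0 < 12)]
    have hkey := fpat_key x y z t
    have hz : (2 * (fpat x y z t : ℤ) + y + t) =
        2*(((y:ℤ)+z)*(x+t) + ((x:ℤ)+y)*(z+t) + x*y + y*z + x*z + z*t) + y*y + t*t := by
      exact_mod_cast hkey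
    have hs : (x:ℤ) + y + z + t = (k:ℤ) + 1 := by exact_mod_cast hsum
    have hs2 : ((x:ℤ) + y + z + t)^2 = ((k:ℤ) + 1)^2 := by rw [hs]
    have ht0 : (0:ℤ) ≤ (t:ℤ) := Int.natCast_nonneg t
    have hineq : (fpat x y z t : ℤ) * 12 ≤ 10*(k:ℤ)^2 + 18*k + 9 := by
      nlinarith [hz, hs, hs2, ht0,
        sq_nonneg (2*(y:ℤ) - x - z - t + 1),
        sq_nonneg ((x:ℤ) - z + t),
        sq_nonneg ((x:ℤ) - z)]
    exact_mod_cast hineq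
end

section
/- For every natural number k, the maximum of g(x,y,z,t) = f(x,y,z,t) + 2x + y + t over all nonnegative integers x, y, z, t with x + y + z + t = k equals ⌊(10k² + 10k + 5)/12⌋. -/
lemma two_dvd_pred_mul (n : ℕ) : 2 * (n*(n-1)/2) = n*(n-1) := by
  apply Nat.mul_div_cancel'
  rcases Nat.even_or_odd n with h | h
  · exact Dvd.dvd.mul_right h.two_dvd _
  · rcases n with _ | m
    · simp
    · simp only [Nat.succ_sub_one]
      exact Dvd.dvd.mul_left ((Nat.Odd.sub_odd h odd_one).two_dvd) _

lemma g12 (x y z t : ℕ) :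
    12*(fpat x y z t + 2*x + y + t) =
      12*((y+z)*(x+t) + (x+y)*(z+t) + x*y + y*z + x*z + z*t)
        + 6*(y*(y-1)) + 6*(t*(t-1)) + 24*x + 12*y + 12*t := by
  have hy := two_dvd_pred_mul y
  have ht := two_dvd_pred_mul t
  unfold fpat
  set a := (y+z)*(x+t)
  set b := (x+y)*(z+t)
  set c := y*(y-1)
  set d := t*(t-1)
  set e := x*y
  set e2 := y*z
  set e3 := x*z
  set e4 := z*t
  omega

lemma keyZ (x y z t : ℤ) (ht : 0 ≤ t) :
    12*((y+z)*(x+t) + (x+y)*(z+t) + x*y + y*z + x*z + z*t)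
      + 6*(y*y - y) + 6*(t*t - t) + 24*x + 12*y + 12*t
      ≤ 10*(x+y+z+t)^2 + 10*(x+y+z+t) + 5 := by
  nlinarith [sq_nonneg (10*x - 8*z - 2*y + 4*t - 7), sq_nonneg (6*y - 6*z - 2*t + 1),
    mul_nonneg ht ht, ht]

lemma cast_pred_mul (n : ℕ) : (n:ℤ) * ((n-1 : ℕ) : ℤ) = (n:ℤ)*(n:ℤ) - (n:ℤ) := by
  rcases n with _ | m
  · simp
  · simp only [Nat.succ_sub_one]
    push_cast
    ring

lemma keyN (x y z t : ℕ) :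
    12*((y+z)*(x+t) + (x+y)*(z+t) + x*y + y*z + x*z + z*t)
      + 6*(y*(y-1)) + 6*(t*(t-1)) + 24*x + 12*y + 12*t
      ≤ 10*(x+y+z+t)^2 + 10*(x+y+z+t) + 5 := by
  have h := keyZ (x:ℤ) y z t (by positivity)
  rw [← Nat.cast_le (α := ℤ)]
  push_cast
  rw [cast_pred_mul y, cast_pred_mul t]
  push_cast at h
  linarith

/-- The maximum of `g(x,y,z,t) = f(x,y,z,t) + 2x + y + t` over all nonnegative integers with
`x+y+z+t = k` equals `⌊(10k² + 10k + 5)/12⌋`. -/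
theorem gpat_max (k : ℕ) :
    IsGreatest {n : ℕ | ∃ x y z t : ℕ, x + y + z + t = k ∧ n = fpat x y z t + 2*x + y + t}
      ((10 * k^2 + 10 * k + 5) / 12) := by
  constructor
  · -- membership
    obtain ⟨m, hk | hk | hk⟩ : ∃ m, k = 3*m ∨ k = 3*m + 1 ∨ k = 3*m + 2 := ⟨k/3, by omega⟩
    · refine ⟨m, m, m, 0, by omega, ?_⟩
      have h12 : 12*(fpat m m m 0 + 2*m + m + 0) = 90*(m*m) + 30*m := by
        rw [g12]
        rcases m with _ | v
        · decide
        · simp only [Nat.succ_sub_one]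
          ring
      have hrw : 10 * k^2 + 10 * k + 5 = 90*(m*m) + 30*m + 5 := by subst hk; ring
      rw [hrw]
      obtain ⟨A, hA⟩ : ∃ A, m*m = A := ⟨_, rfl⟩
      rw [hA] at h12 ⊢
      omega
    · refine ⟨m+1, m, m, 0, by omega, ?_⟩
      have h12 : 12*(fpat (m+1) m m 0 + 2*(m+1) + m + 0) = 90*(m*m) + 90*m + 24 := by
        rw [g12]
        rcases m with _ | v
        · decide
        · simp only [Nat.succ_sub_one]
          ring
      have hrw : 10 * k^2 + 10 * k + 5 = 90*(m*m) + 90*m + 25 := by subst hk; ring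
      rw [hrw]
      obtain ⟨A, hA⟩ : ∃ A, m*m = A := ⟨_, rfl⟩
      rw [hA] at h12 ⊢
      omega
    · refine ⟨m+1, m, m+1, 0, by omega, ?_⟩
      have h12 : 12*(fpat (m+1) m (m+1) 0 + 2*(m+1) + m + 0) = 90*(m*m) + 150*m + 60 := by
        rw [g12]
        rcases m with _ | v
        · decide
        · simp only [Nat.succ_sub_one]
          ring
      have hrw : 10 * k^2 + 10 * k + 5 = 90*(m*m) + 150*m + 65 := by subst hk; ring
      rw [hrw]
      obtain ⟨A, hA⟩ : ∃ A, m*m = A := ⟨_, rfl⟩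
      rw [hA] at h12 ⊢
      omega
  · -- upper bound
    rintro n ⟨x, y, z, t, hk, rfl⟩
    rw [Nat.le_div_iff_mul_le (by norm_num)]
    subst hk
    calc (fpat x y z t + 2*x + y + t) * 12
        = 12*(fpat x y z t + 2*x + y + t) := by ring
      _ = 12*((y+z)*(x+t) + (x+y)*(z+t) + x*y + y*z + x*z + z*t)
            + 6*(y*(y-1)) + 6*(t*(t-1)) + 24*x + 12*y + 12*t := g12 x y z t
      _ ≤ 10*(x+y+z+t)^2 + 10*(x+y+z+t) + 5 := keyN x y z t
      _ = 10 * (x+y+z+t)^2 + 10 * (x+y+z+t) + 5 := by ring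
end

section
/- Let k ≥ 3 and r ≥ 2 be integers, let H be a simple graph on vertex set {1,…,r}, and let H_1,…,H_r be nonempty simple graphs such that the composition H[H_1,…,H_r] is isomorphic to CC_k. Then no single factor H_i contains (the images of) two distinct vertices among v_0,…,v_k; consequently the k+1 factors containing v_0,…,v_k are pairwise distinct and the corresponding k+1 vertices of H form a clique, so H contains a clique of size k+1. -/
lemma CCk_adj_ll {k : ℕ} {i j : Fin (k+1)} (h : i ≠ j) :
    (CCk k).Adj (Sum.inl i) (Sum.inl j) := by
  simp [CCk, SimpleGraph.fromRel_adj, ccRel, h]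

lemma CCk_adj_rr {k : ℕ} {i j : Fin (k+1)} (h : i ≠ j) :
    (CCk k).Adj (Sum.inr i) (Sum.inr j) := by
  simp [CCk, SimpleGraph.fromRel_adj, ccRel, h]

lemma CCk_adj_lr {k : ℕ} {i j : Fin (k+1)} :
    (CCk k).Adj (Sum.inl i) (Sum.inr j) ↔ (j : ℕ) < (i : ℕ) := by
  simp [CCk, SimpleGraph.fromRel_adj, ccRel]

/-- Let `k ≥ 3`, `r ≥ 2`, and suppose `CC_k` is (isomorphic to) a composition
`H[H_1,…,H_r]` with all factors nonempty. This is encoded by a surjective assignment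
`p : V(CC_k) → Fin r` of vertices to factors such that vertices in different factors are
adjacent in `CC_k` iff their factors are adjacent in `H` (the factors `H_i` being the
induced subgraphs on the fibers of `p`). Then no factor contains two distinct vertices
among `v_0,…,v_k`; consequently the `k+1` factors containing `v_0,…,v_k` are pairwise
distinct and form a clique of size `k+1` in `H`. -/
theorem CCk_factorization_clique (k r : ℕ) (hk : 3 ≤ k) (hr : 2 ≤ r)
    (H : SimpleGraph (Fin r)) (p : (Fin (k+1) ⊕ Fin (k+1)) → Fin r)
    (hsurj : Function.Surjective p)
    (hcomp : ∀ u v : Fin (k+1) ⊕ Fin (k+1), p u ≠ p v →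
      ((CCk k).Adj u v ↔ H.Adj (p u) (p v))) :
    (∀ i j : Fin (k+1), p (Sum.inl i) = p (Sum.inl j) → i = j) ∧
    (Finset.univ.image fun i : Fin (k+1) => p (Sum.inl i)).card = k + 1 ∧
    H.IsClique ↑(Finset.univ.image fun i : Fin (k+1) => p (Sum.inl i)) := by

  have key : ∀ u v w, p u = p v → (CCk k).Adj u w → ¬ (CCk k).Adj v w → p w = p u := by
    intro u v w hpv ha hna
    by_contra hne
    have h1 := hcomp u w (fun h => hne h.symm)
    have h2 := hcomp v w (fun h => hne (hpv ▸ h.symm))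
    rw [hpv] at h1
    exact hna (h2.mpr (h1.mp ha))
  have aux : ∀ i j : Fin (k+1), (j : ℕ) < (i : ℕ) → p (Sum.inl i) = p (Sum.inl j) → False := by
    intro i j hlt hpe
    have hij : i ≠ j := fun h => lt_irrefl _ (h ▸ hlt)
    have s1 : p (Sum.inr j) = p (Sum.inl i) :=
      key _ _ _ hpe (CCk_adj_lr.mpr hlt) (by simp [CCk_adj_lr])
    have s2 : p (Sum.inr i) = p (Sum.inl i) := by
      have := key (Sum.inr j) (Sum.inl j) (Sum.inr i)
        (s1.trans hpe) (CCk_adj_rr (fun h => hij h.symm))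
        (by simp [CCk_adj_lr]; omega)
      exact this.trans s1
    have hl : ∀ m : Fin (k+1), p (Sum.inl m) = p (Sum.inl i) := by
      intro m
      rcases lt_trichotomy (m : ℕ) (i : ℕ) with hm | hm | hm
      · exact key (Sum.inl i) (Sum.inr i) (Sum.inl m) s2.symm
          (CCk_adj_ll (fun h => by simp [h] at hm))
          (by rw [(CCk k).adj_comm]; simp [CCk_adj_lr]; omega)
      · have : m = i := Fin.ext hm
        rw [this]
      · have s4 : p (Sum.inr m) = p (Sum.inl i) := by
          have := key (Sum.inr i) (Sum.inl i) (Sum.inr m)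
            s2 (CCk_adj_rr (fun h => by simp [h] at hm))
            (by simp [CCk_adj_lr]; omega)
          exact this.trans s2
        have := key (Sum.inl i) (Sum.inr m) (Sum.inl m) s4.symm
          (CCk_adj_ll (fun h => by simp [h] at hm))
          (by rw [(CCk k).adj_comm]; simp [CCk_adj_lr])
        exact this
    have hR : ∀ m : Fin (k+1), p (Sum.inr m) = p (Sum.inl i) := by
      intro m
      by_cases hm : m = i
      · rw [hm]; exact s2
      · have := key (Sum.inr i) (Sum.inl m) (Sum.inr m)
          (s2.trans (hl m).symm) (CCk_adj_rr (fun h => hm h.symm))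
          (by simp [CCk_adj_lr])
        exact this.trans s2
    have hconst : ∀ u, p u = p (Sum.inl i) := by
      intro u; cases u with
      | inl m => exact hl m
      | inr m => exact hR m
    obtain ⟨d, hd⟩ := Fintype.exists_ne_of_one_lt_card (by simp; omega) (p (Sum.inl i))
    obtain ⟨u, hu⟩ := hsurj d
    exact hd (hu ▸ hconst u)
  have hinj : ∀ i j : Fin (k+1), p (Sum.inl i) = p (Sum.inl j) → i = j := by
    intro i j hpe
    by_contra hij
    rcases lt_or_gt_of_ne (fun h : (i : ℕ) = (j : ℕ) => hij (Fin.ext h)) with h | h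
    · exact aux j i h hpe.symm
    · exact aux i j h hpe
  refine ⟨hinj, ?_, ?_⟩
  · rw [Finset.card_image_of_injective _ (fun i j h => hinj i j h)]
    simp
  · intro a ha b hb hab
    simp only [Finset.coe_image, Finset.coe_univ, Set.image_univ, Set.mem_range] at ha hb
    obtain ⟨i, hi⟩ := ha
    obtain ⟨j, hj⟩ := hb
    have hij : i ≠ j := fun h => hab (by rw [← hi, ← hj, h])
    rw [← hi, ← hj]
    exact (hcomp (Sum.inl i) (Sum.inl j) (by rw [hi, hj]; exact hab)).mp (CCk_adj_ll hij)
end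

section
/- Let k ∈ ℕ and m, m' : {0,…,k} → ℕ, and let G^T = CC_k[m,m']. For −1 ≤ i ≤ k let G^T_i be the subgraph of G^T induced by all instances of v_0,…,v_i and v'_0,…,v'_i, and for 0 ≤ x ≤ Σ_{j≤i} m(j) and 0 ≤ x' ≤ Σ_{j≤i} m'(j) let M_i(x,x') be the maximum cut size cs(S) over all cuts S of G^T_i containing exactly x instances of vertices v_j and exactly x' instances of vertices v'_j (with M_{−1}(0,0) = 0). Then for all 0 ≤ i ≤ k and all such x, x': M_i(x,x') = m'(i)·x' + m(i)·(x+x') + max over integers s, s' with max(0, x − Σ_{j<i} m(j)) ≤ s ≤ min(m(i), x) and max(0, x' − Σ_{j<i} m'(j)) ≤ s' ≤ min(m'(i), x') of [ M_{i−1}(x−s, x'−s') + s'·(Σ_{j<i} m'(j) − m(i) − 2x') + s·(Σ_{j<i}(m(j)+m'(j)) − 2(x+x')) + (s+s')² ]. -/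
def blowRel (k : ℕ) (m m' : ℕ → ℕ) :
    ((Σ i : Fin (k+1), Fin (m i)) ⊕ (Σ i : Fin (k+1), Fin (m' i))) →
    ((Σ i : Fin (k+1), Fin (m i)) ⊕ (Σ i : Fin (k+1), Fin (m' i))) → Prop
  | Sum.inl _, Sum.inl _ => True
  | Sum.inr _, Sum.inr _ => True
  | Sum.inl a, Sum.inr b => (b.1 : ℕ) < (a.1 : ℕ)
  | Sum.inr _, Sum.inl _ => False

instance (k : ℕ) (m m' : ℕ → ℕ) : DecidableRel (blowRel k m m') := fun u v =>
  match u, v with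
  | Sum.inl _, Sum.inl _ => inferInstanceAs (Decidable True)
  | Sum.inr _, Sum.inr _ => inferInstanceAs (Decidable True)
  | Sum.inl a, Sum.inr b => inferInstanceAs (Decidable ((b.1 : ℕ) < (a.1 : ℕ)))
  | Sum.inr _, Sum.inl _ => inferInstanceAs (Decidable False)

/-- The blow-up `CC_k[m,m']`: vertices are the instances `(v_i, a)` with `a < m(i)` and
`(v'_i, b)` with `b < m'(i)`; two distinct vertices are adjacent iff they are instances of
the same vertex of `CC_k` or of two adjacent vertices of `CC_k`. -/
def CCblow (k : ℕ) (m m' : ℕ → ℕ) :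
    SimpleGraph ((Σ i : Fin (k+1), Fin (m i)) ⊕ (Σ i : Fin (k+1), Fin (m' i))) :=
  SimpleGraph.fromRel (blowRel k m m')

instance (k : ℕ) (m m' : ℕ → ℕ) : DecidableRel (CCblow k m m').Adj := fun u v =>
  inferInstanceAs (Decidable (u ≠ v ∧ (blowRel k m m' u v ∨ blowRel k m m' v u)))

/-- Truncated multiplicity function: `trunc m i` agrees with `m` below `i` and vanishes from
`i` on; the blow-up `CC_k[trunc m (i+1), trunc m' (i+1)]` realizes the induced subgraph
`G^T_i` of `G^T = CC_k[m,m']` on the instances of `v_0,…,v_i,v'_0,…,v'_i`. -/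
def trunc (m : ℕ → ℕ) (i : ℕ) : ℕ → ℕ := fun j => if j < i then m j else 0

/-- `M_i(x,x')` of the paper: the maximum cut size over all cuts `S` of `G^T_i` containing
exactly `x` instances of the `v_j` and exactly `x'` instances of the `v'_j`
(here for the blow-up with multiplicities `m, m'`; `G^T_i` is obtained by truncation). -/
def condMaxCut (k : ℕ) (m m' : ℕ → ℕ) (x x' : ℕ) : ℕ :=
  ((Finset.univ.powerset.filter
      fun S : Finset ((Σ i : Fin (k+1), Fin (m i)) ⊕ (Σ i : Fin (k+1), Fin (m' i))) =>
        (S.filter fun u => u.isLeft = true).card = x ∧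
        (S.filter fun u => u.isRight = true).card = x').sup
    fun S => cutSize (CCblow k m m') S)

/-!
Split the vertices of `G^T_i` into the old ones (those of `G^T_{i-1}`), the `m(i)` new instances
of `v_i` and the `m'(i)` new instances of `v'_i`. The instances of `v_i` form a clique joined to
every old vertex, the instances of `v'_i` a clique joined exactly to the old instances of the
`v'_j`, and there is no edge between the two new cliques. Hence the cut size of a cut `S` is the
cut size of its restriction to `G^T_{i-1}` plus a quantity depending only on `x`, `x'` and the
numbers `s`, `s'` of new instances of `v_i`, `v'_i` in `S`. Since any cut of `G^T_{i-1}` extends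
by any `s ≤ m(i)`, `s' ≤ m'(i)` new vertices, maximizing first over the restriction and then
over `s`, `s'` gives the recurrence.
-/

open Finset

lemma card_sigma_filter_fst {k : ℕ} {n : ℕ → ℕ} (P : ℕ → Prop) [DecidablePred P] :
    #{p : Σ j : Fin (k+1), Fin (n j) | P p.1} = ∑ j ∈ (range (k+1)).filter P, n j := by
  rw [show ({p : Σ j : Fin (k+1), Fin (n j) | P p.1} : Finset _)
      = ({j : Fin (k+1) | P j} : Finset _).sigma fun _ => univ by ext; simp,
    card_sigma, sum_filter, sum_filter]
  simp only [card_univ, Fintype.card_fin]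
  exact Fin.sum_univ_eq_sum_range (fun j => if P j then n j else 0) (k+1)

abbrev CCVertex (k : ℕ) (n n' : ℕ → ℕ) :=
  (Σ i : Fin (k+1), Fin (n i)) ⊕ (Σ i : Fin (k+1), Fin (n' i))

namespace CCVertex

variable {k : ℕ} {n n' : ℕ → ℕ}

def index : CCVertex k n n' → ℕ := Sum.elim (fun p => p.1) (fun p => p.1)

lemma card_isLeft_filter_index (P : ℕ → Prop) [DecidablePred P] :
    #{u : CCVertex k n n' | u.isLeft ∧ P (index u)} = ∑ j ∈ (range (k+1)).filter P, n j := by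
  rw [← card_sigma_filter_fst, ← card_map (Function.Embedding.inl : _ ↪ CCVertex k n n')]
  refine congrArg card (ext fun u => ?_)
  rcases u with u | u <;> rw [mem_filter] <;> simp [index]

lemma card_isRight_filter_index (P : ℕ → Prop) [DecidablePred P] :
    #{u : CCVertex k n n' | u.isRight ∧ P (index u)}
      = ∑ j ∈ (range (k+1)).filter P, n' j := by
  rw [← card_sigma_filter_fst, ← card_map (Function.Embedding.inr : _ ↪ CCVertex k n n')]
  refine congrArg card (ext fun u => ?_)
  rcases u with u | u <;> rw [mem_filter] <;> simp [index]

end CCVertex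

namespace CCblow

variable {k : ℕ} {n n' : ℕ → ℕ}

@[simp] lemma adj_inl_inl {a b : Σ j : Fin (k+1), Fin (n j)} :
    (CCblow k n n').Adj (.inl a) (.inl b) ↔ a ≠ b := by
  simp [CCblow, blowRel]

@[simp] lemma adj_inr_inr {a b : Σ j : Fin (k+1), Fin (n' j)} :
    (CCblow k n n').Adj (.inr a) (.inr b) ↔ a ≠ b := by
  simp [CCblow, blowRel]

@[simp] lemma adj_inl_inr {a : Σ j : Fin (k+1), Fin (n j)} {b : Σ j : Fin (k+1), Fin (n' j)} :
    (CCblow k n n').Adj (.inl a) (.inr b) ↔ (b.1 : ℕ) < a.1 := by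
  simp [CCblow, blowRel]

@[simp] lemma adj_inr_inl {a : Σ j : Fin (k+1), Fin (n' j)} {b : Σ j : Fin (k+1), Fin (n j)} :
    (CCblow k n n').Adj (.inr a) (.inl b) ↔ (a.1 : ℕ) < b.1 := by
  simp [CCblow, blowRel]

end CCblow

lemma range_filter_lt {n t : ℕ} (h : t ≤ n) : (range n).filter (· < t) = range t := by
  ext j; simp only [mem_filter, mem_range]; omega

lemma sum_range_trunc (f : ℕ → ℕ) {n t : ℕ} (h : t ≤ n) :
    ∑ j ∈ range n, trunc f t j = ∑ j ∈ range t, f j := by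
  simp only [trunc]
  rw [← sum_filter, range_filter_lt h]

section Level

open CCVertex

variable {k : ℕ} {m m' : ℕ → ℕ} {i : ℕ}

lemma trunc_le_trunc_succ (f : ℕ → ℕ) (i j : ℕ) : trunc f i j ≤ trunc f (i+1) j := by
  unfold trunc; split_ifs <;> omega

lemma index_lt {t : ℕ} (u : CCVertex k (trunc m t) (trunc m' t)) : index u < t := by
  by_contra h
  rcases u with ⟨j, a⟩ | ⟨j, a⟩ <;>
  · have := a.isLt
    simp only [index, Sum.elim_inl, Sum.elim_inr, not_lt] at h
    simp [trunc, h.not_gt] at this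

lemma card_sigma_trunc (f : ℕ → ℕ) {t : ℕ} (ht : t ≤ k + 1) :
    Fintype.card (Σ j : Fin (k+1), Fin (trunc f t j)) = ∑ j ∈ range t, f j := by
  simp only [Fintype.card_sigma, Fintype.card_fin]
  rw [Fin.sum_univ_eq_sum_range (trunc f t), sum_range_trunc f ht]

def truncCastSucc (f : ℕ → ℕ) (i : ℕ) (p : Σ j : Fin (k+1), Fin (trunc f i j)) :
    Σ j : Fin (k+1), Fin (trunc f (i+1) j) :=
  ⟨p.1, Fin.castLE (trunc_le_trunc_succ f i p.1) p.2⟩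

@[simp] lemma fst_truncCastSucc (f : ℕ → ℕ) (i : ℕ)
    (p : Σ j : Fin (k+1), Fin (trunc f i j)) :
    (truncCastSucc f i p).1 = p.1 := rfl

lemma truncCastSucc_injective (f : ℕ → ℕ) (i : ℕ) :
    Function.Injective (truncCastSucc (k := k) f i) := by
  rintro ⟨j, a⟩ ⟨j', b⟩ h
  simp only [truncCastSucc, Sigma.mk.inj_iff] at h
  obtain ⟨rfl, h⟩ := h
  simp_all [Fin.castLE_inj]

def embSucc (m m' : ℕ → ℕ) (i : ℕ) :
    CCVertex k (trunc m i) (trunc m' i) ↪ CCVertex k (trunc m (i+1)) (trunc m' (i+1)) :=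
  ⟨Sum.map (truncCastSucc m i) (truncCastSucc m' i),
    Sum.map_injective.mpr ⟨truncCastSucc_injective m i, truncCastSucc_injective m' i⟩⟩

@[simp] lemma index_embSucc (v : CCVertex k (trunc m i) (trunc m' i)) :
    index (embSucc m m' i v) = index v := by
  rcases v with p | p <;> rfl

@[simp] lemma isLeft_embSucc (v : CCVertex k (trunc m i) (trunc m' i)) :
    (embSucc m m' i v).isLeft = v.isLeft := by
  rcases v with p | p <;> rfl

@[simp] lemma isRight_embSucc (v : CCVertex k (trunc m i) (trunc m' i)) :
    (embSucc m m' i v).isRight = v.isRight := by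
  rcases v with p | p <;> rfl

lemma adj_embSucc_iff {v w : CCVertex k (trunc m i) (trunc m' i)} :
    (CCblow k (trunc m (i+1)) (trunc m' (i+1))).Adj (embSucc m m' i v) (embSucc m m' i w) ↔
      (CCblow k (trunc m i) (trunc m' i)).Adj v w := by
  rcases v with p | p <;> rcases w with q | q <;>
    simp [embSucc, (truncCastSucc_injective _ i).ne_iff]

lemma exists_embSucc_eq {u : CCVertex k (trunc m (i+1)) (trunc m' (i+1))} (hu : index u < i) :
    ∃ v, embSucc m m' i v = u := by
  have key (f : ℕ → ℕ) (j : Fin (k+1)) (hj : (j : ℕ) < i) (a : Fin (trunc f (i+1) j)) :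
      ∃ p, truncCastSucc f i p = ⟨j, a⟩ := by
    have he : trunc f i j = trunc f (i+1) j := by simp [trunc, hj, hj.trans (Nat.lt_succ_self i)]
    exact ⟨⟨j, Fin.cast he.symm a⟩, rfl⟩
  rcases u with ⟨j, a⟩ | ⟨j, a⟩
  · obtain ⟨p, hp⟩ := key m j hu a
    exact ⟨.inl p, by simp [embSucc, hp]⟩
  · obtain ⟨p, hp⟩ := key m' j hu a
    exact ⟨.inr p, by simp [embSucc, hp]⟩

end Level

section Part

open CCVertex

variable {k : ℕ} {m m' : ℕ → ℕ} {i : ℕ}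

/-- `0` for the instances of the `v_j` and `v'_j` with `j < i`, `1` for those of `v_i`, `2` for
those of `v'_i`. -/
def part (u : CCVertex k (trunc m (i+1)) (trunc m' (i+1))) : Fin 3 :=
  if index u < i then 0 else if u.isLeft then 1 else 2

variable {u w : CCVertex k (trunc m (i+1)) (trunc m' (i+1))}

lemma part_eq_zero_iff : part u = 0 ↔ index u < i := by
  unfold part; split_ifs <;> simp_all

lemma part_eq_one_iff : part u = 1 ↔ u.isLeft ∧ index u = i := by
  have := index_lt u
  unfold part; split_ifs <;> simp_all <;> omega

lemma part_eq_two_iff : part u = 2 ↔ u.isRight ∧ index u = i := by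
  have := index_lt u
  rcases u with p | p <;> unfold part <;> split_ifs <;> simp_all <;> omega

@[simp] lemma part_embSucc (v : CCVertex k (trunc m i) (trunc m' i)) :
    part (embSucc m m' i v) = 0 := by
  rw [part_eq_zero_iff, index_embSucc]
  exact index_lt v

lemma adj_iff_of_part_eq_one (hu : part u = 1) (hne : u ≠ w) :
    (CCblow k (trunc m (i+1)) (trunc m' (i+1))).Adj u w ↔ part w ≠ 2 := by
  have := index_lt w
  rw [ne_eq, part_eq_two_iff]
  rw [part_eq_one_iff] at hu
  rcases u with p | p <;> rcases w with q | q <;> simp_all [index]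
  omega

lemma adj_iff_of_part_eq_two (hu : part u = 2) (hne : u ≠ w) :
    (CCblow k (trunc m (i+1)) (trunc m' (i+1))).Adj u w ↔ w.isRight := by
  have := index_lt w
  rw [part_eq_two_iff] at hu
  rcases u with p | p <;> rcases w with q | q <;> simp_all [index]

variable (m m') in
lemma card_part_eq_one (hik : i ≤ k) :
    #{u : CCVertex k (trunc m (i+1)) (trunc m' (i+1)) | part u = 1} = m i := by
  rw [filter_congr fun u _ => part_eq_one_iff, card_isLeft_filter_index (· = i), range_filter_eq,
    if_pos (by omega), sum_singleton]
  simp [trunc]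

variable (m m') in
lemma card_part_eq_two (hik : i ≤ k) :
    #{u : CCVertex k (trunc m (i+1)) (trunc m' (i+1)) | part u = 2} = m' i := by
  rw [filter_congr fun u _ => part_eq_two_iff, card_isRight_filter_index (· = i), range_filter_eq,
    if_pos (by omega), sum_singleton]
  simp [trunc]

variable (m m') in
lemma card_part_eq_zero_isLeft (hik : i ≤ k) :
    #{u : CCVertex k (trunc m (i+1)) (trunc m' (i+1)) | part u = 0 ∧ u.isLeft}
      = ∑ j ∈ range i, m j := by
  rw [filter_congr fun u _ => by rw [part_eq_zero_iff, and_comm],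
    card_isLeft_filter_index (· < i), range_filter_lt (by omega)]
  exact sum_congr rfl fun j hj => by simp [trunc, (mem_range.mp hj).trans (Nat.lt_succ_self i)]

variable (m m') in
lemma card_part_eq_zero_isRight (hik : i ≤ k) :
    #{u : CCVertex k (trunc m (i+1)) (trunc m' (i+1)) | part u = 0 ∧ u.isRight}
      = ∑ j ∈ range i, m' j := by
  rw [filter_congr fun u _ => by rw [part_eq_zero_iff, and_comm],
    card_isRight_filter_index (· < i), range_filter_lt (by omega)]
  exact sum_congr rfl fun j hj => by simp [trunc, (mem_range.mp hj).trans (Nat.lt_succ_self i)]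

end Part

section CutPairs

variable {V : Type*} [Fintype V] [DecidableEq V] (G : SimpleGraph V) [DecidableRel G.Adj]
  (S : Finset V) {P Q : V → Prop} [DecidablePred P] [DecidablePred Q]

lemma card_cutPairs_filter_of_adj (h : ∀ u w, P u → Q w → u ≠ w → G.Adj u w) :
    #{p : V × V | (G.Adj p.1 p.2 ∧ p.1 ∈ S ∧ p.2 ∉ S) ∧ P p.1 ∧ Q p.2}
      = #{u ∈ S | P u} * #{w ∈ Sᶜ | Q w} := by
  rw [← card_product]
  refine congrArg card (ext fun p => ?_)
  simp only [mem_filter, mem_univ, true_and, mem_product, mem_compl]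
  constructor
  · rintro ⟨⟨-, hu, hw⟩, hP, hQ⟩
    exact ⟨⟨hu, hP⟩, hw, hQ⟩
  · rintro ⟨⟨hu, hP⟩, hw, hQ⟩
    exact ⟨⟨h _ _ hP hQ (ne_of_mem_of_not_mem hu hw), hu, hw⟩, hP, hQ⟩

lemma card_cutPairs_filter_of_not_adj (h : ∀ u w, P u → Q w → ¬ G.Adj u w) :
    #{p : V × V | (G.Adj p.1 p.2 ∧ p.1 ∈ S ∧ p.2 ∉ S) ∧ P p.1 ∧ Q p.2} = 0 :=
  card_eq_zero.mpr <| filter_eq_empty_iff.mpr fun _ _ ⟨⟨hadj, _⟩, hP, hQ⟩ =>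
    h _ _ hP hQ hadj

end CutPairs

lemma card_filter_eq_card_filter_and_add {α : Type*} (T : Finset α) (P Q : α → Prop)
    [DecidablePred P] [DecidablePred Q] :
    #{u ∈ T | P u} = #{u ∈ T | P u ∧ Q u} + #{u ∈ T | P u ∧ ¬ Q u} := by
  rw [← filter_filter, ← filter_filter, card_filter_add_card_filter_not]

lemma card_filter_compl_add {α : Type*} [Fintype α] [DecidableEq α] (S : Finset α)
    (P : α → Prop) [DecidablePred P] :
    #{u ∈ Sᶜ | P u} + #{u ∈ S | P u} = #{u | P u} := by
  rw [add_comm, ← card_union_of_disjoint (disjoint_filter_filter disjoint_compl_right),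
    ← filter_union, union_compl]

section Restrict

open CCVertex

variable {k : ℕ} {m m' : ℕ → ℕ} {i : ℕ}

def restrictCut (S : Finset (CCVertex k (trunc m (i+1)) (trunc m' (i+1)))) :
    Finset (CCVertex k (trunc m i) (trunc m' i)) :=
  {v | embSucc m m' i v ∈ S}

variable (S : Finset (CCVertex k (trunc m (i+1)) (trunc m' (i+1))))

lemma filter_part_eq_zero : {u ∈ S | part u = 0} = (restrictCut S).map (embSucc m m' i) := by
  ext u
  simp only [mem_filter, mem_map, restrictCut, mem_univ, true_and]
  constructor
  · rintro ⟨hu, h0⟩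
    obtain ⟨v, rfl⟩ := exists_embSucc_eq (part_eq_zero_iff.mp h0)
    exact ⟨v, hu, rfl⟩
  · rintro ⟨v, hv, rfl⟩
    exact ⟨hv, part_embSucc v⟩

lemma card_filter_part_eq_zero_isLeft :
    #{u ∈ S | part u = 0 ∧ u.isLeft} = #{v ∈ restrictCut S | v.isLeft} := by
  rw [← filter_filter, filter_part_eq_zero, filter_map, card_map]
  simp

lemma card_filter_part_eq_zero_isRight :
    #{u ∈ S | part u = 0 ∧ u.isRight} = #{v ∈ restrictCut S | v.isRight} := by
  rw [← filter_filter, filter_part_eq_zero, filter_map, card_map]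
  simp

lemma card_filter_part_eq_zero :
    #{u ∈ S | part u = 0}
      = #{u ∈ S | part u = 0 ∧ u.isLeft} + #{u ∈ S | part u = 0 ∧ u.isRight} := by
  rw [card_filter_eq_card_filter_and_add S _ fun u => u.isLeft]
  simp

lemma card_filter_isLeft :
    #{u ∈ S | u.isLeft} = #{u ∈ S | part u = 0 ∧ u.isLeft} + #{u ∈ S | part u = 1} := by
  rw [card_filter_eq_card_filter_and_add S _ fun u => part u = 0]
  congr 2 <;> ext u <;> have := index_lt u <;> simp [part_eq_zero_iff, part_eq_one_iff, and_comm]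
  omega

lemma card_filter_isRight :
    #{u ∈ S | u.isRight} = #{u ∈ S | part u = 0 ∧ u.isRight} + #{u ∈ S | part u = 2} := by
  rw [card_filter_eq_card_filter_and_add S _ fun u => part u = 0]
  congr 2 <;> ext u <;> have := index_lt u <;> simp [part_eq_zero_iff, part_eq_two_iff, and_comm]
  omega

end Restrict

section Decomposition

open CCVertex

variable {k : ℕ} {m m' : ℕ → ℕ} {i : ℕ}

local notation "V₁" => CCVertex k (trunc m (i+1)) (trunc m' (i+1))
local notation "G₁" => CCblow k (trunc m (i+1)) (trunc m' (i+1))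

variable (S : Finset (CCVertex k (trunc m (i+1)) (trunc m' (i+1))))

lemma card_cutPairs_filter_part_zero_zero :
    #{p : V₁ × V₁ | ((G₁).Adj p.1 p.2 ∧ p.1 ∈ S ∧ p.2 ∉ S) ∧
        part p.1 = 0 ∧ part p.2 = 0}
      = cutSize (CCblow k (trunc m i) (trunc m' i)) (restrictCut S) := by
  rw [cutSize, ← card_map ((embSucc m m' i).prodMap (embSucc m m' i))]
  refine congrArg card (ext fun ⟨u, w⟩ => ?_)
  simp only [mem_filter, mem_map, mem_univ, true_and, Prod.exists, Function.Embedding.coe_prodMap,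
    Prod.map, Prod.mk.injEq, restrictCut]
  constructor
  · rintro ⟨⟨hadj, hu, hw⟩, hu0, hw0⟩
    obtain ⟨v, rfl⟩ := exists_embSucc_eq (part_eq_zero_iff.mp hu0)
    obtain ⟨v', rfl⟩ := exists_embSucc_eq (part_eq_zero_iff.mp hw0)
    exact ⟨v, v', ⟨adj_embSucc_iff.mp hadj, hu, hw⟩, rfl, rfl⟩
  · rintro ⟨v, v', ⟨hadj, hv, hv'⟩, rfl, rfl⟩
    exact ⟨⟨adj_embSucc_iff.mpr hadj, hv, hv'⟩, part_embSucc v, part_embSucc v'⟩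

lemma isRight_of_adj_of_part_eq_two {u w : V₁} (hu : part u = 2) (hadj : (G₁).Adj u w) :
    w.isRight :=
  (adj_iff_of_part_eq_two hu hadj.ne).mp hadj

lemma card_cutPairs_filter_part_zero_two :
    #{p : V₁ × V₁ | ((G₁).Adj p.1 p.2 ∧ p.1 ∈ S ∧ p.2 ∉ S) ∧
        part p.1 = 0 ∧ part p.2 = 2}
      = #{u ∈ S | part u = 0 ∧ u.isRight} * #{w ∈ Sᶜ | part w = 2} := by
  rw [← card_cutPairs_filter_of_adj _ S fun u w hu hw hne =>
    ((adj_iff_of_part_eq_two hw hne.symm).mpr hu.2).symm]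
  exact congrArg card <| filter_congr fun p _ =>
    ⟨fun ⟨hc, h1, h2⟩ => ⟨hc, ⟨h1, isRight_of_adj_of_part_eq_two h2 hc.1.symm⟩, h2⟩,
      fun ⟨hc, ⟨h1, _⟩, h2⟩ => ⟨hc, h1, h2⟩⟩

lemma card_cutPairs_filter_part_two_zero :
    #{p : V₁ × V₁ | ((G₁).Adj p.1 p.2 ∧ p.1 ∈ S ∧ p.2 ∉ S) ∧
        part p.1 = 2 ∧ part p.2 = 0}
      = #{u ∈ S | part u = 2} * #{w ∈ Sᶜ | part w = 0 ∧ w.isRight} := by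
  rw [← card_cutPairs_filter_of_adj _ S fun u w hu hw hne =>
    (adj_iff_of_part_eq_two hu hne).mpr hw.2]
  exact congrArg card <| filter_congr fun p _ =>
    ⟨fun ⟨hc, h1, h2⟩ => ⟨hc, h1, h2, isRight_of_adj_of_part_eq_two h1 hc.1⟩,
      fun ⟨hc, h1, h2, _⟩ => ⟨hc, h1, h2⟩⟩

lemma cutSize_succ_eq :
    cutSize G₁ S = cutSize (CCblow k (trunc m i) (trunc m' i)) (restrictCut S)
      + #{u ∈ S | part u = 0} * #{w ∈ Sᶜ | part w = 1}
      + #{u ∈ S | part u = 0 ∧ u.isRight} * #{w ∈ Sᶜ | part w = 2}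
      + #{u ∈ S | part u = 1} * #{w ∈ Sᶜ | part w = 0}
      + #{u ∈ S | part u = 1} * #{w ∈ Sᶜ | part w = 1}
      + #{u ∈ S | part u = 2} * #{w ∈ Sᶜ | part w = 0 ∧ w.isRight}
      + #{u ∈ S | part u = 2} * #{w ∈ Sᶜ | part w = 2} := by
  rw [cutSize, card_eq_sum_card_fiberwise (f := fun p => (part p.1, part p.2)) (t := univ)
    fun _ _ => mem_univ _, Fintype.sum_prod_type]
  simp only [Fin.sum_univ_three, filter_filter, Prod.mk.injEq]
  rw [card_cutPairs_filter_part_zero_two, card_cutPairs_filter_part_two_zero,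
    card_cutPairs_filter_part_zero_zero,
    card_cutPairs_filter_of_adj _ S (P := (part · = 0)) (Q := (part · = 1)) fun u w hu hw hne =>
      ((adj_iff_of_part_eq_one hw hne.symm).mpr (by simp [hu])).symm,
    card_cutPairs_filter_of_adj _ S (P := (part · = 1)) (Q := (part · = 0)) fun u w hu hw hne =>
      (adj_iff_of_part_eq_one hu hne).mpr (by simp [hw]),
    card_cutPairs_filter_of_adj _ S (P := (part · = 1)) (Q := (part · = 1)) fun u w hu hw hne =>
      (adj_iff_of_part_eq_one hu hne).mpr (by simp [hw]),
    card_cutPairs_filter_of_not_adj _ S (P := (part · = 1)) (Q := (part · = 2))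
      fun u w hu hw hadj => (adj_iff_of_part_eq_one hu hadj.ne).mp hadj hw,
    card_cutPairs_filter_of_not_adj _ S (P := (part · = 2)) (Q := (part · = 1))
      fun u w hu hw hadj => not_isLeft_and_isRight
        ⟨(part_eq_one_iff.mp hw).1, isRight_of_adj_of_part_eq_two hu hadj⟩,
    card_cutPairs_filter_of_adj _ S (P := (part · = 2)) (Q := (part · = 2)) fun u w hu hw hne =>
      (adj_iff_of_part_eq_two hu hne).mpr (part_eq_two_iff.mp hw).1]
  ring

/-- The bracket of the recurrence without its `M_{i-1}` term. -/
def layerGain (m m' : ℕ → ℕ) (i x x' s s' : ℕ) : ℤ :=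
  (s' : ℤ) * (((∑ j ∈ range i, m' j : ℕ) : ℤ) - (m i : ℤ) - 2 * (x' : ℤ))
    + (s : ℤ) * (((∑ j ∈ range i, (m j + m' j) : ℕ) : ℤ) - 2 * ((x : ℤ) + (x' : ℤ)))
    + ((s : ℤ) + (s' : ℤ)) ^ 2

lemma cutSize_succ (hik : i ≤ k) :
    (cutSize G₁ S : ℤ) = cutSize (CCblow k (trunc m i) (trunc m' i)) (restrictCut S)
      + m' i * #{u ∈ S | u.isRight} + m i * (#{u ∈ S | u.isLeft} + #{u ∈ S | u.isRight})
      + layerGain m m' i #{u ∈ S | u.isLeft} #{u ∈ S | u.isRight}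
          #{u ∈ S | part u = 1} #{u ∈ S | part u = 2} := by
  have compl_eq {P : V₁ → Prop} [DecidablePred P] {c : ℕ} (hc : #{u | P u} = c) :
      (#{w ∈ Sᶜ | P w} : ℤ) = c - #{u ∈ S | P u} := by
    rw [← hc, ← card_filter_compl_add S P]; push_cast; ring
  have h0 := compl_eq (P := (part · = 0)) <| (card_filter_part_eq_zero univ).trans <| by
    rw [card_part_eq_zero_isLeft m m' hik, card_part_eq_zero_isRight m m' hik]
  have h0R := compl_eq (P := fun u => part u = 0 ∧ u.isRight) (card_part_eq_zero_isRight m m' hik)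
  have h1 := compl_eq (card_part_eq_one m m' hik)
  have h2 := compl_eq (card_part_eq_two m m' hik)
  rw [cutSize_succ_eq S, card_filter_isLeft S, card_filter_isRight S, layerGain]
  push_cast
  rw [h0, h0R, h1, h2, card_filter_part_eq_zero S, sum_add_distrib]
  push_cast
  ring

end Decomposition

section Extension

open CCVertex

variable {k : ℕ} {m m' : ℕ → ℕ} {i : ℕ}

lemma exists_restrictCut_eq (hik : i ≤ k) (S₀ : Finset (CCVertex k (trunc m i) (trunc m' i)))
    {s s' : ℕ} (hs : s ≤ m i) (hs' : s' ≤ m' i) :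
    ∃ S : Finset (CCVertex k (trunc m (i+1)) (trunc m' (i+1))),
      restrictCut S = S₀ ∧ #{u ∈ S | part u = 1} = s ∧ #{u ∈ S | part u = 2} = s' := by
  obtain ⟨T₁, hT₁, rfl⟩ :=
    exists_subset_card_eq (hs.trans_eq (card_part_eq_one m m' hik).symm)
  obtain ⟨T₂, hT₂, rfl⟩ :=
    exists_subset_card_eq (hs'.trans_eq (card_part_eq_two m m' hik).symm)
  have h₁ : ∀ u ∈ T₁, part u = 1 := fun u hu => (mem_filter.mp (hT₁ hu)).2
  have h₂ : ∀ u ∈ T₂, part u = 2 := fun u hu => (mem_filter.mp (hT₂ hu)).2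
  refine ⟨S₀.map (embSucc m m' i) ∪ T₁ ∪ T₂, ?_, ?_, ?_⟩
  · ext v
    have h₁' := mt (h₁ (embSucc m m' i v))
    have h₂' := mt (h₂ (embSucc m m' i v))
    simp_all [restrictCut]
  · rw [filter_union, filter_union, filter_true_of_mem h₁,
      filter_false_of_mem (s := T₂) fun u hu => by simp [h₂ u hu],
      filter_false_of_mem (s := S₀.map _) fun u hu => by
        obtain ⟨v, -, rfl⟩ := mem_map.mp hu; simp]
    simp
  · rw [filter_union, filter_union, filter_true_of_mem h₂,
      filter_false_of_mem (s := T₁) fun u hu => by simp [h₁ u hu],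
      filter_false_of_mem (s := S₀.map _) fun u hu => by
        obtain ⟨v, -, rfl⟩ := mem_map.mp hu; simp]
    simp

end Extension

lemma card_filter_isLeft_disjSum {α β : Type*} (s : Finset α) (t : Finset β) :
    #{u ∈ s.disjSum t | u.isLeft} = #s := by
  rw [← card_map (Function.Embedding.inl : α ↪ α ⊕ β)]
  refine congrArg card (ext fun u => ?_)
  rcases u with a | b <;> simp

lemma card_filter_isRight_disjSum {α β : Type*} (s : Finset α) (t : Finset β) :
    #{u ∈ s.disjSum t | u.isRight} = #t := by
  rw [← card_map (Function.Embedding.inr : β ↪ α ⊕ β)]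
  refine congrArg card (ext fun u => ?_)
  rcases u with a | b <;> simp

section MaxCut

variable {k : ℕ} {n n' : ℕ → ℕ} {x x' : ℕ}

lemma cutSize_le_condMaxCut {S : Finset (CCVertex k n n')} (hx : #{u ∈ S | u.isLeft} = x)
    (hx' : #{u ∈ S | u.isRight} = x') : cutSize (CCblow k n n') S ≤ condMaxCut k n n' x x' :=
  le_sup (by simp [hx, hx'])

lemma exists_cutSize_eq_condMaxCut (hx : x ≤ Fintype.card (Σ j : Fin (k+1), Fin (n j)))
    (hx' : x' ≤ Fintype.card (Σ j : Fin (k+1), Fin (n' j))) :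
    ∃ S : Finset (CCVertex k n n'), #{u ∈ S | u.isLeft} = x ∧ #{u ∈ S | u.isRight} = x' ∧
      cutSize (CCblow k n n') S = condMaxCut k n n' x x' := by
  obtain ⟨T, -, hT⟩ := exists_subset_card_eq (hx.trans_eq card_univ.symm)
  obtain ⟨T', -, hT'⟩ := exists_subset_card_eq (hx'.trans_eq card_univ.symm)
  have hne : T.disjSum T' ∈ univ.powerset.filter fun S : Finset (CCVertex k n n') =>
      #{u ∈ S | u.isLeft} = x ∧ #{u ∈ S | u.isRight} = x' :=
    mem_filter.mpr ⟨mem_powerset.mpr (subset_univ _), by rw [card_filter_isLeft_disjSum, hT],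
      by rw [card_filter_isRight_disjSum, hT']⟩
  obtain ⟨S, hS, hmax⟩ := exists_mem_eq_sup _ ⟨_, hne⟩ fun S => cutSize (CCblow k n n') S
  rw [mem_filter] at hS
  exact ⟨S, hS.2.1, hS.2.2, hmax.symm⟩

end MaxCut

section Recurrence

variable {k : ℕ} {m m' : ℕ → ℕ} {i : ℕ}

lemma condMaxCut_succ_ge (hik : i ≤ k) {y y' s s' : ℕ} (hs : s ≤ m i) (hs' : s' ≤ m' i)
    (hy : y ≤ ∑ j ∈ range i, m j) (hy' : y' ≤ ∑ j ∈ range i, m' j) :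
    (condMaxCut k (trunc m i) (trunc m' i) y y' : ℤ) + m' i * (y' + s')
        + m i * (y + s + (y' + s')) + layerGain m m' i (y + s) (y' + s') s s'
      ≤ condMaxCut k (trunc m (i+1)) (trunc m' (i+1)) (y + s) (y' + s') := by
  obtain ⟨S₀, hl, hr, hmax⟩ := exists_cutSize_eq_condMaxCut (k := k) (n := trunc m i)
    (n' := trunc m' i) (hy.trans_eq (card_sigma_trunc m (by omega)).symm)
    (hy'.trans_eq (card_sigma_trunc m' (by omega)).symm)
  obtain ⟨S, rfl, h₁, h₂⟩ := exists_restrictCut_eq hik S₀ hs hs'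
  have hx : #{u ∈ S | u.isLeft} = y + s := by
    rw [card_filter_isLeft, card_filter_part_eq_zero_isLeft, hl, h₁]
  have hx' : #{u ∈ S | u.isRight} = y' + s' := by
    rw [card_filter_isRight, card_filter_part_eq_zero_isRight, hr, h₂]
  have hle : (cutSize (CCblow k (trunc m (i+1)) (trunc m' (i+1))) S : ℤ)
      ≤ condMaxCut k (trunc m (i+1)) (trunc m' (i+1)) (y + s) (y' + s') :=
    mod_cast cutSize_le_condMaxCut hx hx'
  rw [cutSize_succ S hik, hmax, hx, hx', h₁, h₂] at hle
  push_cast at hle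
  exact hle

lemma exists_condMaxCut_succ_le (hik : i ≤ k) {x x' : ℕ} (hx : x ≤ ∑ j ∈ range (i+1), m j)
    (hx' : x' ≤ ∑ j ∈ range (i+1), m' j) :
    ∃ y y' s s', y + s = x ∧ y' + s' = x' ∧ s ≤ m i ∧ s' ≤ m' i ∧
      y ≤ ∑ j ∈ range i, m j ∧ y' ≤ ∑ j ∈ range i, m' j ∧
      (condMaxCut k (trunc m (i+1)) (trunc m' (i+1)) x x' : ℤ)
        ≤ condMaxCut k (trunc m i) (trunc m' i) y y' + m' i * x' + m i * (x + x')
          + layerGain m m' i x x' s s' := by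
  obtain ⟨S, hl, hr, hmax⟩ := exists_cutSize_eq_condMaxCut (k := k) (n := trunc m (i+1))
    (n' := trunc m' (i+1)) (hx.trans_eq (card_sigma_trunc m (by omega)).symm)
    (hx'.trans_eq (card_sigma_trunc m' (by omega)).symm)
  refine ⟨_, _, _, _, (card_filter_isLeft S).symm.trans hl, (card_filter_isRight S).symm.trans hr,
    ?_, ?_, ?_, ?_, ?_⟩
  · exact (card_le_card (filter_subset_filter _ (subset_univ S))).trans_eq
      (card_part_eq_one m m' hik)
  · exact (card_le_card (filter_subset_filter _ (subset_univ S))).trans_eq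
      (card_part_eq_two m m' hik)
  · exact (card_le_card (filter_subset_filter _ (subset_univ S))).trans_eq
      (card_part_eq_zero_isLeft m m' hik)
  · exact (card_le_card (filter_subset_filter _ (subset_univ S))).trans_eq
      (card_part_eq_zero_isRight m m' hik)
  · rw [← hmax, cutSize_succ S hik, hl, hr, card_filter_part_eq_zero_isLeft,
      card_filter_part_eq_zero_isRight]
    have hle : cutSize (CCblow k (trunc m i) (trunc m' i)) (restrictCut S)
        ≤ condMaxCut k (trunc m i) (trunc m' i) #{v ∈ restrictCut S | v.isLeft}
          #{v ∈ restrictCut S | v.isRight} := cutSize_le_condMaxCut rfl rfl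
    linarith [(Nat.cast_le (α := ℤ)).mpr hle]

end Recurrence

/-- The recurrence of Theorem 3 (the dynamic program): for `0 ≤ i ≤ k`,
`0 ≤ x ≤ Σ_{j≤i} m(j)` and `0 ≤ x' ≤ Σ_{j≤i} m'(j)`,
`M_i(x,x') = m'(i)x' + m(i)(x+x') + max_{s,s'} [ M_{i-1}(x-s, x'-s')
  + s'(Σ_{j<i} m'(j) − m(i) − 2x') + s(Σ_{j<i}(m(j)+m'(j)) − 2(x+x')) + (s+s')² ]`,
the max being over integers `max(0, x−Σ_{j<i} m(j)) ≤ s ≤ min(m(i),x)` and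
`max(0, x'−Σ_{j<i} m'(j)) ≤ s' ≤ min(m'(i),x')`. -/
theorem condMaxCut_recurrence (k : ℕ) (m m' : ℕ → ℕ) (i : ℕ) (hik : i ≤ k) (x x' : ℕ)
    (hx : x ≤ ∑ j ∈ Finset.range (i+1), m j)
    (hx' : x' ≤ ∑ j ∈ Finset.range (i+1), m' j) :
    IsGreatest
      {v : ℤ | ∃ s s' : ℕ,
        x - (∑ j ∈ Finset.range i, m j) ≤ s ∧ s ≤ min (m i) x ∧
        x' - (∑ j ∈ Finset.range i, m' j) ≤ s' ∧ s' ≤ min (m' i) x' ∧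
        v = (condMaxCut k (trunc m i) (trunc m' i) (x - s) (x' - s') : ℤ)
            + (s' : ℤ) * (((∑ j ∈ Finset.range i, m' j : ℕ) : ℤ) - (m i : ℤ) - 2 * (x' : ℤ))
            + (s : ℤ) * (((∑ j ∈ Finset.range i, (m j + m' j) : ℕ) : ℤ)
                - 2 * ((x : ℤ) + (x' : ℤ)))
            + ((s : ℤ) + (s' : ℤ))^2}
      ((condMaxCut k (trunc m (i+1)) (trunc m' (i+1)) x x' : ℤ)
        - (m' i : ℤ) * (x' : ℤ) - (m i : ℤ) * ((x : ℤ) + (x' : ℤ))) := by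
  constructor
  · obtain ⟨y, y', s, s', rfl, rfl, hs, hs', hy, hy', hle⟩ :=
      exists_condMaxCut_succ_le hik hx hx'
    have hge := condMaxCut_succ_ge hik hs hs' hy hy'
    refine ⟨s, s', by omega, by omega, by omega, by omega, ?_⟩
    simp only [Nat.add_sub_cancel, layerGain] at hle hge ⊢
    push_cast at hle hge ⊢
    linarith
  · rintro v ⟨s, s', hs, hsx, hs', hsx', rfl⟩
    obtain ⟨y, rfl⟩ : ∃ y, x = y + s := ⟨x - s, by omega⟩
    obtain ⟨y', rfl⟩ : ∃ y', x' = y' + s' := ⟨x' - s', by omega⟩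
    have hge := condMaxCut_succ_ge (m := m) (m' := m') (y := y) (y' := y') (s := s) (s' := s') hik
      (by omega) (by omega) (by omega) (by omega)
    simp only [Nat.add_sub_cancel, layerGain] at hge ⊢
    push_cast at hge ⊢
    linarith
end

section
/- Let k ∈ ℕ and m, m' : {0,…,k} → ℕ. Define integer-valued functions F_i for −1 ≤ i ≤ k by F_{−1}(0,0) = 0 and, for 0 ≤ i ≤ k, F_i(x,x') = m'(i)·x' + m(i)·(x+x') + max over integers s, s' with max(0, x − Σ_{j<i} m(j)) ≤ s ≤ min(m(i), x) and max(0, x' − Σ_{j<i} m'(j)) ≤ s' ≤ min(m'(i), x') of [ F_{i−1}(x−s, x'−s') + s'·(Σ_{j<i} m'(j) − m(i) − 2x') + s·(Σ_{j<i}(m(j)+m'(j)) − 2(x+x')) + (s+s')² ]. Then the maximum cut size of the blow-up CC_k[m,m'] equals the maximum of F_k(x,x') over all integers 0 ≤ x ≤ Σ_{j≤k} m(j) and 0 ≤ x' ≤ Σ_{j≤k} m'(j). -/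
/-- The dynamic-programming function: `Frec m m' (i+1)` is `F_i` of the paper
(`Frec m m' 0 0 0 = 0` is `F_{-1}(0,0) = 0`), defined by the recurrence
`F_i(x,x') = m'(i)x' + m(i)(x+x') + max_{s,s'} [ F_{i-1}(x-s, x'-s')
  + s'(Σ_{j<i} m'(j) − m(i) − 2x') + s(Σ_{j<i}(m(j)+m'(j)) − 2(x+x')) + (s+s')² ]`,
the max over integers `max(0, x−Σ_{j<i} m(j)) ≤ s ≤ min(m(i),x)` and
`max(0, x'−Σ_{j<i} m'(j)) ≤ s' ≤ min(m'(i),x')`. -/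
noncomputable def Frec (m m' : ℕ → ℕ) : ℕ → ℕ → ℕ → ℤ
  | 0, _, _ => 0
  | (i+1), x, x' => (m' i : ℤ) * (x' : ℤ) + (m i : ℤ) * ((x : ℤ) + (x' : ℤ)) +
      sSup {v : ℤ | ∃ s s' : ℕ,
        x - (∑ j ∈ Finset.range i, m j) ≤ s ∧ s ≤ min (m i) x ∧
        x' - (∑ j ∈ Finset.range i, m' j) ≤ s' ∧ s' ≤ min (m' i) x' ∧
        v = Frec m m' i (x - s) (x' - s')
            + (s' : ℤ) * (((∑ j ∈ Finset.range i, m' j : ℕ) : ℤ) - (m i : ℤ) - 2 * (x' : ℤ))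
            + (s : ℤ) * (((∑ j ∈ Finset.range i, (m j + m' j) : ℕ) : ℤ)
                - 2 * ((x : ℤ) + (x' : ℤ)))
            + ((s : ℤ) + (s' : ℤ))^2}



def gval (m m' t t' : ℕ → ℕ) (i : ℕ) : ℤ :=
  (∑ j ∈ Finset.range i, (t j : ℤ)) *
      ((∑ j ∈ Finset.range i, (m j : ℤ)) - ∑ j ∈ Finset.range i, (t j : ℤ))
  + (∑ j ∈ Finset.range i, (t' j : ℤ)) *
      ((∑ j ∈ Finset.range i, (m' j : ℤ)) - ∑ j ∈ Finset.range i, (t' j : ℤ))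
  + ∑ p ∈ Finset.range i, ∑ q ∈ Finset.range p,
      ((t p : ℤ) * ((m' q : ℤ) - (t' q : ℤ)) + ((m p : ℤ) - (t p : ℤ)) * (t' q : ℤ))

lemma gval_congr (m m' t₁ t₂ t₁' t₂' : ℕ → ℕ) (i : ℕ)
    (h : ∀ j < i, t₁ j = t₂ j) (h' : ∀ j < i, t₁' j = t₂' j) :
    gval m m' t₁ t₁' i = gval m m' t₂ t₂' i := by
  unfold gval
  have e1 : ∑ j ∈ Finset.range i, (t₁ j : ℤ) = ∑ j ∈ Finset.range i, (t₂ j : ℤ) :=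
    Finset.sum_congr rfl fun j hj => by rw [h j (Finset.mem_range.mp hj)]
  have e2 : ∑ j ∈ Finset.range i, (t₁' j : ℤ) = ∑ j ∈ Finset.range i, (t₂' j : ℤ) :=
    Finset.sum_congr rfl fun j hj => by rw [h' j (Finset.mem_range.mp hj)]
  rw [e1, e2]
  congr 1
  refine Finset.sum_congr rfl fun p hp => Finset.sum_congr rfl fun q hq => ?_
  have hpq : q < i := lt_trans (Finset.mem_range.mp hq) (Finset.mem_range.mp hp)
  rw [h p (Finset.mem_range.mp hp), h' q hpq]

lemma gval_succ (m m' t t' : ℕ → ℕ) (i : ℕ) :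
    gval m m' t t' (i+1) = gval m m' t t' i
      + (m' i : ℤ) * (∑ j ∈ Finset.range (i+1), (t' j : ℤ))
      + (m i : ℤ) * ((∑ j ∈ Finset.range (i+1), (t j : ℤ)) + ∑ j ∈ Finset.range (i+1), (t' j : ℤ))
      + (t' i : ℤ) * ((∑ j ∈ Finset.range i, (m' j : ℤ)) - (m i : ℤ)
          - 2 * ∑ j ∈ Finset.range (i+1), (t' j : ℤ))
      + (t i : ℤ) * ((∑ j ∈ Finset.range i, (m j : ℤ)) + (∑ j ∈ Finset.range i, (m' j : ℤ))
          - 2 * ((∑ j ∈ Finset.range (i+1), (t j : ℤ)) + ∑ j ∈ Finset.range (i+1), (t' j : ℤ)))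
      + ((t i : ℤ) + (t' i : ℤ))^2 := by
  unfold gval
  rw [Finset.sum_range_succ (fun p => ∑ q ∈ Finset.range p,
      ((t p : ℤ) * ((m' q : ℤ) - (t' q : ℤ)) + ((m p : ℤ) - (t p : ℤ)) * (t' q : ℤ)))]
  rw [Finset.sum_add_distrib, ← Finset.mul_sum, ← Finset.mul_sum, Finset.sum_sub_distrib]
  simp only [Finset.sum_range_succ]
  ring
def innerSet (m m' : ℕ → ℕ) (i x x' : ℕ) : Set ℤ :=
  {v : ℤ | ∃ s s' : ℕ,
        x - (∑ j ∈ Finset.range i, m j) ≤ s ∧ s ≤ min (m i) x ∧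
        x' - (∑ j ∈ Finset.range i, m' j) ≤ s' ∧ s' ≤ min (m' i) x' ∧
        v = Frec m m' i (x - s) (x' - s')
            + (s' : ℤ) * (((∑ j ∈ Finset.range i, m' j : ℕ) : ℤ) - (m i : ℤ) - 2 * (x' : ℤ))
            + (s : ℤ) * (((∑ j ∈ Finset.range i, (m j + m' j) : ℕ) : ℤ)
                - 2 * ((x : ℤ) + (x' : ℤ)))
            + ((s : ℤ) + (s' : ℤ))^2}

lemma frec_succ (m m' : ℕ → ℕ) (i x x' : ℕ) :
    Frec m m' (i+1) x x' = (m' i : ℤ) * (x' : ℤ) + (m i : ℤ) * ((x : ℤ) + (x' : ℤ)) +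
      sSup (innerSet m m' i x x') := rfl

lemma innerSet_finite (m m' : ℕ → ℕ) (i x x' : ℕ) : (innerSet m m' i x x').Finite := by
  have h : innerSet m m' i x x' ⊆
      (fun p : ℕ × ℕ => Frec m m' i (x - p.1) (x' - p.2)
            + (p.2 : ℤ) * (((∑ j ∈ Finset.range i, m' j : ℕ) : ℤ) - (m i : ℤ) - 2 * (x' : ℤ))
            + (p.1 : ℤ) * (((∑ j ∈ Finset.range i, (m j + m' j) : ℕ) : ℤ)
                - 2 * ((x : ℤ) + (x' : ℤ)))
            + ((p.1 : ℤ) + (p.2 : ℤ))^2) ''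
        (Set.Iic (min (m i) x) ×ˢ Set.Iic (min (m' i) x')) := by
    rintro v ⟨s, s', h1, h2, h3, h4, rfl⟩
    exact ⟨(s, s'), ⟨h2, h4⟩, rfl⟩
  exact Set.Finite.subset (Set.Finite.image _ ((Set.finite_Iic _).prod (Set.finite_Iic _))) h

lemma innerSet_nonempty (m m' : ℕ → ℕ) (i x x' : ℕ)
    (hx : x ≤ ∑ j ∈ Finset.range (i+1), m j) (hx' : x' ≤ ∑ j ∈ Finset.range (i+1), m' j) :
    (innerSet m m' i x x').Nonempty := by
  rw [Finset.sum_range_succ] at hx hx'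
  exact ⟨_, min (m i) x, min (m' i) x', by omega, le_rfl, by omega, le_rfl, rfl⟩

lemma innerSet_isGreatest (m m' : ℕ → ℕ) (i x x' : ℕ)
    (hx : x ≤ ∑ j ∈ Finset.range (i+1), m j) (hx' : x' ≤ ∑ j ∈ Finset.range (i+1), m' j) :
    IsGreatest (innerSet m m' i x x') (sSup (innerSet m m' i x x')) :=
  ⟨(innerSet_nonempty m m' i x x' hx hx').csSup_mem (innerSet_finite m m' i x x'),
   fun _ hv => le_csSup (innerSet_finite m m' i x x').bddAbove hv⟩

def cutsSet (m m' : ℕ → ℕ) (i x x' : ℕ) : Set ℤ :=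
  {v : ℤ | ∃ t t' : ℕ → ℕ, (∀ j, t j ≤ m j) ∧ (∀ j, t' j ≤ m' j) ∧
      (∑ j ∈ Finset.range i, t j = x) ∧ (∑ j ∈ Finset.range i, t' j = x') ∧
      v = gval m m' t t' i}

lemma frec_isGreatest (m m' : ℕ → ℕ) :
    ∀ i x x', x ≤ ∑ j ∈ Finset.range i, m j → x' ≤ ∑ j ∈ Finset.range i, m' j →
    IsGreatest (cutsSet m m' i x x') (Frec m m' i x x')
  | 0, x, x', hx, hx' => by
      simp only [Finset.range_zero, Finset.sum_empty, Nat.le_zero] at hx hx'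
      subst hx hx'
      constructor
      · exact ⟨fun _ => 0, fun _ => 0, fun _ => Nat.zero_le _, fun _ => Nat.zero_le _,
          by simp, by simp, by simp [gval, Frec]⟩
      · rintro v ⟨t, t', _, _, _, _, rfl⟩
        simp [gval, Frec]
  | (i+1), x, x', hx, hx' => by
      have hG := innerSet_isGreatest m m' i x x' hx hx'
      rw [frec_succ]
      have hxs : x ≤ (∑ j ∈ Finset.range i, m j) + m i := by
        rwa [Finset.sum_range_succ] at hx
      have hxs' : x' ≤ (∑ j ∈ Finset.range i, m' j) + m' i := by
        rwa [Finset.sum_range_succ] at hx'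
      constructor
      · -- membership
        obtain ⟨s, s', h1, h2, h3, h4, hv⟩ := hG.1
        have hs2 : s ≤ m i ∧ s ≤ x := ⟨le_trans h2 (min_le_left _ _), le_trans h2 (min_le_right _ _)⟩
        have hs4 : s' ≤ m' i ∧ s' ≤ x' := ⟨le_trans h4 (min_le_left _ _), le_trans h4 (min_le_right _ _)⟩
        have hyx : x - s ≤ ∑ j ∈ Finset.range i, m j := by omega
        have hyx' : x' - s' ≤ ∑ j ∈ Finset.range i, m' j := by omega
        obtain ⟨t, t', ht, ht', hts, hts', htv⟩ :=
          (frec_isGreatest m m' i (x-s) (x'-s') hyx hyx').1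
        refine ⟨Function.update t i s, Function.update t' i s', ?_, ?_, ?_, ?_, ?_⟩
        · intro j
          rcases eq_or_ne j i with rfl | hj
          · simpa using hs2.1
          · simpa [Function.update_of_ne hj] using ht j
        · intro j
          rcases eq_or_ne j i with rfl | hj
          · simpa using hs4.1
          · simpa [Function.update_of_ne hj] using ht' j
        · rw [Finset.sum_range_succ, Finset.sum_congr rfl
            (fun j hj => Function.update_of_ne (Nat.ne_of_lt (Finset.mem_range.mp hj)) s t),
            hts, Function.update_self]
          omega
        · rw [Finset.sum_range_succ, Finset.sum_congr rfl
            (fun j hj => Function.update_of_ne (Nat.ne_of_lt (Finset.mem_range.mp hj)) s' t'),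
            hts', Function.update_self]
          omega
        · -- value equality
          rw [hv, gval_succ]
          have e0 : gval m m' (Function.update t i s) (Function.update t' i s') i
              = gval m m' t t' i := by
            refine gval_congr _ _ _ _ _ _ _ ?_ ?_ <;>
              exact fun j hj => Function.update_of_ne (Nat.ne_of_lt hj) _ _
          have eX : ∑ j ∈ Finset.range (i+1), ((Function.update t i s j : ℕ) : ℤ) = (x : ℤ) := by
            rw [Finset.sum_range_succ, Finset.sum_congr rfl
              (fun j hj => by rw [Function.update_of_ne (Nat.ne_of_lt (Finset.mem_range.mp hj))]),
              Function.update_self, ← Nat.cast_sum, ← Nat.cast_add, hts]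
            have : x - s + s = x := by omega
            rw [this]
          have eX' : ∑ j ∈ Finset.range (i+1), ((Function.update t' i s' j : ℕ) : ℤ) = (x' : ℤ) := by
            rw [Finset.sum_range_succ, Finset.sum_congr rfl
              (fun j hj => by rw [Function.update_of_ne (Nat.ne_of_lt (Finset.mem_range.mp hj))]),
              Function.update_self, ← Nat.cast_sum, ← Nat.cast_add, hts']
            have : x' - s' + s' = x' := by omega
            rw [this]
          rw [e0, eX, eX', ← htv, Function.update_self, Function.update_self]
          push_cast
          rw [Finset.sum_add_distrib]
          ring
      · -- upper bound
        rintro v ⟨t, t', ht, ht', hts, hts', rfl⟩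
        have hsum : (∑ j ∈ Finset.range i, t j) + t i = x := by
          rw [← Finset.sum_range_succ]; exact hts
        have hsum' : (∑ j ∈ Finset.range i, t' j) + t' i = x' := by
          rw [← Finset.sum_range_succ]; exact hts'
        have hym : (∑ j ∈ Finset.range i, t j) ≤ ∑ j ∈ Finset.range i, m j :=
          Finset.sum_le_sum fun j _ => ht j
        have hym' : (∑ j ∈ Finset.range i, t' j) ≤ ∑ j ∈ Finset.range i, m' j :=
          Finset.sum_le_sum fun j _ => ht' j
        have hle : gval m m' t t' i ≤ Frec m m' i (∑ j ∈ Finset.range i, t j)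
            (∑ j ∈ Finset.range i, t' j) :=
          (frec_isGreatest m m' i _ _ hym hym').2 ⟨t, t', ht, ht', rfl, rfl, rfl⟩
        have hmem : (Frec m m' i (∑ j ∈ Finset.range i, t j) (∑ j ∈ Finset.range i, t' j)
            + ((t' i : ℕ) : ℤ) * (((∑ j ∈ Finset.range i, m' j : ℕ) : ℤ) - (m i : ℤ) - 2 * (x' : ℤ))
            + ((t i : ℕ) : ℤ) * (((∑ j ∈ Finset.range i, (m j + m' j) : ℕ) : ℤ)
                - 2 * ((x : ℤ) + (x' : ℤ)))
            + ((t i : ℤ) + (t' i : ℤ))^2) ∈ innerSet m m' i x x' := by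
          refine ⟨t i, t' i, by omega, by simp only [le_min_iff]; exact ⟨ht i, by omega⟩,
            by omega, by simp only [le_min_iff]; exact ⟨ht' i, by omega⟩, ?_⟩
          have e1 : x - t i = ∑ j ∈ Finset.range i, t j := by omega
          have e2 : x' - t' i = ∑ j ∈ Finset.range i, t' j := by omega
          rw [e1, e2]
        have hwle := hG.2 hmem
        have eX : ∑ j ∈ Finset.range (i+1), ((t j : ℕ) : ℤ) = (x : ℤ) := by
          rw [← Nat.cast_sum, hts]
        have eX' : ∑ j ∈ Finset.range (i+1), ((t' j : ℕ) : ℤ) = (x' : ℤ) := by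
          rw [← Nat.cast_sum, hts']
        rw [gval_succ, eX, eX']
        have hc : ((∑ j ∈ Finset.range i, (m j + m' j) : ℕ) : ℤ)
            = (∑ j ∈ Finset.range i, (m j : ℤ)) + ∑ j ∈ Finset.range i, (m' j : ℤ) := by
          push_cast; rw [Finset.sum_add_distrib]
        rw [hc] at hwle
        push_cast at hwle ⊢
        linarith

section
variable (k : ℕ) (m m' : ℕ → ℕ)
  (S : Finset ((Σ i : Fin (k+1), Fin (m i)) ⊕ (Σ i : Fin (k+1), Fin (m' i))))

def cntL (i : ℕ) : ℕ :=
  if h : i < k+1 then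
    (Finset.univ.filter fun a : Fin (m i) => Sum.inl ⟨⟨i, h⟩, a⟩ ∈ S).card
  else 0

def cntR (i : ℕ) : ℕ :=
  if h : i < k+1 then
    (Finset.univ.filter fun b : Fin (m' i) => Sum.inr ⟨⟨i, h⟩, b⟩ ∈ S).card
  else 0

lemma cntL_le (i : ℕ) : cntL k m m' S i ≤ m i := by
  unfold cntL; split
  · exact le_trans (Finset.card_filter_le _ _) (by simp)
  · exact Nat.zero_le _

lemma cntR_le (i : ℕ) : cntR k m m' S i ≤ m' i := by
  unfold cntR; split
  · exact le_trans (Finset.card_filter_le _ _) (by simp)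
  · exact Nat.zero_le _

lemma sumχL (i : Fin (k+1)) :
    ∑ a : Fin (m ↑i), (if Sum.inl ⟨i, a⟩ ∈ S then (1:ℤ) else 0) = (cntL k m m' S ↑i : ℤ) := by
  rw [Finset.sum_boole]
  unfold cntL
  rw [dif_pos i.isLt]

lemma sumχR (i : Fin (k+1)) :
    ∑ b : Fin (m' ↑i), (if Sum.inr ⟨i, b⟩ ∈ S then (1:ℤ) else 0) = (cntR k m m' S ↑i : ℤ) := by
  rw [Finset.sum_boole]
  unfold cntR
  rw [dif_pos i.isLt]

lemma sumχL' (i : Fin (k+1)) :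
    ∑ a : Fin (m ↑i), (1 - if Sum.inl ⟨i, a⟩ ∈ S then (1:ℤ) else 0)
      = (m ↑i : ℤ) - (cntL k m m' S ↑i : ℤ) := by
  rw [Finset.sum_sub_distrib, sumχL, Finset.sum_const, Finset.card_univ, Fintype.card_fin]
  simp

lemma sumχR' (i : Fin (k+1)) :
    ∑ b : Fin (m' ↑i), (1 - if Sum.inr ⟨i, b⟩ ∈ S then (1:ℤ) else 0)
      = (m' ↑i : ℤ) - (cntR k m m' S ↑i : ℤ) := by
  rw [Finset.sum_sub_distrib, sumχR, Finset.sum_const, Finset.card_univ, Fintype.card_fin]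
  simp

lemma adjLL (u v : Σ i : Fin (k+1), Fin (m i)) :
    (CCblow k m m').Adj (Sum.inl u) (Sum.inl v) ↔ u ≠ v := by
  simp [CCblow, SimpleGraph.fromRel_adj, blowRel]

lemma adjRR (u v : Σ i : Fin (k+1), Fin (m' i)) :
    (CCblow k m m').Adj (Sum.inr u) (Sum.inr v) ↔ u ≠ v := by
  simp [CCblow, SimpleGraph.fromRel_adj, blowRel]

lemma adjLR (u : Σ i : Fin (k+1), Fin (m i)) (w : Σ i : Fin (k+1), Fin (m' i)) :
    (CCblow k m m').Adj (Sum.inl u) (Sum.inr w) ↔ (w.1 : ℕ) < (u.1 : ℕ) := by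
  simp [CCblow, SimpleGraph.fromRel_adj, blowRel]

lemma adjRL (w : Σ i : Fin (k+1), Fin (m' i)) (u : Σ i : Fin (k+1), Fin (m i)) :
    (CCblow k m m').Adj (Sum.inr w) (Sum.inl u) ↔ (w.1 : ℕ) < (u.1 : ℕ) := by
  simp [CCblow, SimpleGraph.fromRel_adj, blowRel]

end

section
variable (k : ℕ) (m m' : ℕ → ℕ)
  (S : Finset ((Σ i : Fin (k+1), Fin (m i)) ⊕ (Σ i : Fin (k+1), Fin (m' i))))

lemma sum_ite_const {β : Type*} (c : Prop) [Decidable c] (s : Finset β) (f : β → ℤ) :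
    ∑ b ∈ s, (if c then f b else 0) = if c then (∑ b ∈ s, f b) else 0 := by
  split_ifs <;> simp

lemma range_filter_lt_s18 (i : ℕ) (hi : i ≤ k+1) :
    (Finset.range (k+1)).filter (fun j => j < i) = Finset.range i := by
  ext j; simp only [Finset.mem_filter, Finset.mem_range]; omega

lemma blockLL :
    ∑ u : (Σ i : Fin (k+1), Fin (m i)), ∑ v : (Σ i : Fin (k+1), Fin (m i)),
      (if ((CCblow k m m').Adj (Sum.inl u) (Sum.inl v) ∧ Sum.inl u ∈ S ∧ Sum.inl v ∉ S)
        then (1:ℤ) else 0)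
    = (∑ i ∈ Finset.range (k+1), (cntL k m m' S i : ℤ)) *
        (∑ i ∈ Finset.range (k+1), ((m i : ℤ) - (cntL k m m' S i : ℤ))) := by
  have p : ∀ u v : (Σ i : Fin (k+1), Fin (m i)),
      (if ((CCblow k m m').Adj (Sum.inl u) (Sum.inl v) ∧ Sum.inl u ∈ S ∧ Sum.inl v ∉ S)
        then (1:ℤ) else 0)
      = (if Sum.inl u ∈ S then (1:ℤ) else 0) * (1 - if Sum.inl v ∈ S then (1:ℤ) else 0) := by
    intro u v
    by_cases h1 : Sum.inl u ∈ S <;> by_cases h2 : Sum.inl v ∈ S <;>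
      simp [h1, h2, adjLL]
    rintro rfl; exact h2 h1
  simp only [p]
  rw [← Finset.sum_mul_sum]
  congr 1
  · rw [← Finset.univ_sigma_univ, Finset.sum_sigma,
      Finset.sum_congr rfl (fun i _ => sumχL k m m' S i),
      Fin.sum_univ_eq_sum_range (fun j => (cntL k m m' S j : ℤ))]
  · rw [← Finset.univ_sigma_univ, Finset.sum_sigma,
      Finset.sum_congr rfl (fun i _ => sumχL' k m m' S i),
      Fin.sum_univ_eq_sum_range (fun j => ((m j : ℤ) - (cntL k m m' S j : ℤ)))]

lemma blockRR :
    ∑ u : (Σ i : Fin (k+1), Fin (m' i)), ∑ v : (Σ i : Fin (k+1), Fin (m' i)),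
      (if ((CCblow k m m').Adj (Sum.inr u) (Sum.inr v) ∧ Sum.inr u ∈ S ∧ Sum.inr v ∉ S)
        then (1:ℤ) else 0)
    = (∑ i ∈ Finset.range (k+1), (cntR k m m' S i : ℤ)) *
        (∑ i ∈ Finset.range (k+1), ((m' i : ℤ) - (cntR k m m' S i : ℤ))) := by
  have p : ∀ u v : (Σ i : Fin (k+1), Fin (m' i)),
      (if ((CCblow k m m').Adj (Sum.inr u) (Sum.inr v) ∧ Sum.inr u ∈ S ∧ Sum.inr v ∉ S)
        then (1:ℤ) else 0)
      = (if Sum.inr u ∈ S then (1:ℤ) else 0) * (1 - if Sum.inr v ∈ S then (1:ℤ) else 0) := by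
    intro u v
    by_cases h1 : Sum.inr u ∈ S <;> by_cases h2 : Sum.inr v ∈ S <;>
      simp [h1, h2, adjRR]
    rintro rfl; exact h2 h1
  simp only [p]
  rw [← Finset.sum_mul_sum]
  congr 1
  · rw [← Finset.univ_sigma_univ, Finset.sum_sigma,
      Finset.sum_congr rfl (fun i _ => sumχR k m m' S i),
      Fin.sum_univ_eq_sum_range (fun j => (cntR k m m' S j : ℤ))]
  · rw [← Finset.univ_sigma_univ, Finset.sum_sigma,
      Finset.sum_congr rfl (fun i _ => sumχR' k m m' S i),
      Fin.sum_univ_eq_sum_range (fun j => ((m' j : ℤ) - (cntR k m m' S j : ℤ)))]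

lemma blockLR :
    ∑ u : (Σ i : Fin (k+1), Fin (m i)), ∑ w : (Σ i : Fin (k+1), Fin (m' i)),
      (if ((CCblow k m m').Adj (Sum.inl u) (Sum.inr w) ∧ Sum.inl u ∈ S ∧ Sum.inr w ∉ S)
        then (1:ℤ) else 0)
    = ∑ i ∈ Finset.range (k+1), (cntL k m m' S i : ℤ) *
        ∑ j ∈ Finset.range (k+1),
          (if j < i then ((m' j : ℤ) - (cntR k m m' S j : ℤ)) else 0) := by
  have p : ∀ (u : Σ i : Fin (k+1), Fin (m i)) (w : Σ i : Fin (k+1), Fin (m' i)),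
      (if ((CCblow k m m').Adj (Sum.inl u) (Sum.inr w) ∧ Sum.inl u ∈ S ∧ Sum.inr w ∉ S)
        then (1:ℤ) else 0)
      = if (w.1 : ℕ) < (u.1 : ℕ) then
          ((if Sum.inl u ∈ S then (1:ℤ) else 0) * (1 - if Sum.inr w ∈ S then (1:ℤ) else 0))
        else 0 := by
    intro u w
    by_cases h3 : (w.1 : ℕ) < (u.1 : ℕ) <;> by_cases h1 : Sum.inl u ∈ S <;>
      by_cases h2 : Sum.inr w ∈ S <;> simp [h1, h2, h3, adjLR]
  simp only [p]
  have inner : ∀ u : (Σ i : Fin (k+1), Fin (m i)),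
      ∑ w : (Σ i : Fin (k+1), Fin (m' i)),
        (if (w.1 : ℕ) < (u.1 : ℕ) then
          ((if Sum.inl u ∈ S then (1:ℤ) else 0) * (1 - if Sum.inr w ∈ S then (1:ℤ) else 0))
        else 0)
      = (if Sum.inl u ∈ S then (1:ℤ) else 0) *
          ∑ j ∈ Finset.range (k+1),
            (if j < (u.1 : ℕ) then ((m' j : ℤ) - (cntR k m m' S j : ℤ)) else 0) := by
    intro u
    rw [← Finset.univ_sigma_univ, Finset.sum_sigma]
    dsimp only
    have e1 : ∀ j : Fin (k+1),
        ∑ b : Fin (m' ↑j),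
          (if (j : ℕ) < (u.1 : ℕ) then
            ((if Sum.inl u ∈ S then (1:ℤ) else 0) *
              (1 - if Sum.inr (⟨j, b⟩ : Σ i : Fin (k+1), Fin (m' i)) ∈ S then (1:ℤ) else 0))
          else 0)
        = if (j : ℕ) < (u.1 : ℕ) then
            ((if Sum.inl u ∈ S then (1:ℤ) else 0) * ((m' ↑j : ℤ) - (cntR k m m' S ↑j : ℤ)))
          else 0 := by
      intro j
      rw [sum_ite_const, ← Finset.mul_sum, sumχR']
    rw [Finset.sum_congr rfl (fun j _ => e1 j),
      Fin.sum_univ_eq_sum_range (fun jj => if jj < (u.1 : ℕ) then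
        ((if Sum.inl u ∈ S then (1:ℤ) else 0) * ((m' jj : ℤ) - (cntR k m m' S jj : ℤ)))
        else 0), Finset.mul_sum]
    exact Finset.sum_congr rfl fun j _ => by split_ifs <;> ring
  simp only [inner]
  rw [← Finset.univ_sigma_univ, Finset.sum_sigma]
  dsimp only
  have e2 : ∀ i : Fin (k+1),
      ∑ a : Fin (m ↑i),
        ((if Sum.inl (⟨i, a⟩ : Σ i : Fin (k+1), Fin (m i)) ∈ S then (1:ℤ) else 0) *
          ∑ j ∈ Finset.range (k+1),
            (if j < (i : ℕ) then ((m' j : ℤ) - (cntR k m m' S j : ℤ)) else 0))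
      = (cntL k m m' S ↑i : ℤ) *
          ∑ j ∈ Finset.range (k+1),
            (if j < (i : ℕ) then ((m' j : ℤ) - (cntR k m m' S j : ℤ)) else 0) := by
    intro i
    rw [← Finset.sum_mul, sumχL]
  rw [Finset.sum_congr rfl (fun i _ => e2 i),
    Fin.sum_univ_eq_sum_range (fun ii => (cntL k m m' S ii : ℤ) *
      ∑ j ∈ Finset.range (k+1), (if j < ii then ((m' j : ℤ) - (cntR k m m' S j : ℤ)) else 0))]

lemma blockRL :
    ∑ w : (Σ i : Fin (k+1), Fin (m' i)), ∑ u : (Σ i : Fin (k+1), Fin (m i)),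
      (if ((CCblow k m m').Adj (Sum.inr w) (Sum.inl u) ∧ Sum.inr w ∈ S ∧ Sum.inl u ∉ S)
        then (1:ℤ) else 0)
    = ∑ j ∈ Finset.range (k+1), (cntR k m m' S j : ℤ) *
        ∑ i ∈ Finset.range (k+1),
          (if j < i then ((m i : ℤ) - (cntL k m m' S i : ℤ)) else 0) := by
  have p : ∀ (w : Σ i : Fin (k+1), Fin (m' i)) (u : Σ i : Fin (k+1), Fin (m i)),
      (if ((CCblow k m m').Adj (Sum.inr w) (Sum.inl u) ∧ Sum.inr w ∈ S ∧ Sum.inl u ∉ S)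
        then (1:ℤ) else 0)
      = if (w.1 : ℕ) < (u.1 : ℕ) then
          ((if Sum.inr w ∈ S then (1:ℤ) else 0) * (1 - if Sum.inl u ∈ S then (1:ℤ) else 0))
        else 0 := by
    intro w u
    by_cases h3 : (w.1 : ℕ) < (u.1 : ℕ) <;> by_cases h1 : Sum.inr w ∈ S <;>
      by_cases h2 : Sum.inl u ∈ S <;> simp [h1, h2, h3, adjRL]
  simp only [p]
  have inner : ∀ w : (Σ i : Fin (k+1), Fin (m' i)),
      ∑ u : (Σ i : Fin (k+1), Fin (m i)),
        (if (w.1 : ℕ) < (u.1 : ℕ) then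
          ((if Sum.inr w ∈ S then (1:ℤ) else 0) * (1 - if Sum.inl u ∈ S then (1:ℤ) else 0))
        else 0)
      = (if Sum.inr w ∈ S then (1:ℤ) else 0) *
          ∑ i ∈ Finset.range (k+1),
            (if (w.1 : ℕ) < i then ((m i : ℤ) - (cntL k m m' S i : ℤ)) else 0) := by
    intro w
    rw [← Finset.univ_sigma_univ, Finset.sum_sigma]
    dsimp only
    have e1 : ∀ i : Fin (k+1),
        ∑ a : Fin (m ↑i),
          (if (w.1 : ℕ) < (i : ℕ) then
            ((if Sum.inr w ∈ S then (1:ℤ) else 0) *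
              (1 - if Sum.inl (⟨i, a⟩ : Σ i : Fin (k+1), Fin (m i)) ∈ S then (1:ℤ) else 0))
          else 0)
        = if (w.1 : ℕ) < (i : ℕ) then
            ((if Sum.inr w ∈ S then (1:ℤ) else 0) * ((m ↑i : ℤ) - (cntL k m m' S ↑i : ℤ)))
          else 0 := by
      intro i
      rw [sum_ite_const, ← Finset.mul_sum, sumχL']
    rw [Finset.sum_congr rfl (fun i _ => e1 i),
      Fin.sum_univ_eq_sum_range (fun ii => if (w.1 : ℕ) < ii then
        ((if Sum.inr w ∈ S then (1:ℤ) else 0) * ((m ii : ℤ) - (cntL k m m' S ii : ℤ)))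
        else 0), Finset.mul_sum]
    exact Finset.sum_congr rfl fun i _ => by split_ifs <;> ring
  simp only [inner]
  rw [← Finset.univ_sigma_univ, Finset.sum_sigma]
  dsimp only
  have e2 : ∀ j : Fin (k+1),
      ∑ b : Fin (m' ↑j),
        ((if Sum.inr (⟨j, b⟩ : Σ i : Fin (k+1), Fin (m' i)) ∈ S then (1:ℤ) else 0) *
          ∑ i ∈ Finset.range (k+1),
            (if (j : ℕ) < i then ((m i : ℤ) - (cntL k m m' S i : ℤ)) else 0))
      = (cntR k m m' S ↑j : ℤ) *
          ∑ i ∈ Finset.range (k+1),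
            (if (j : ℕ) < i then ((m i : ℤ) - (cntL k m m' S i : ℤ)) else 0) := by
    intro j
    rw [← Finset.sum_mul, sumχR]
  rw [Finset.sum_congr rfl (fun j _ => e2 j),
    Fin.sum_univ_eq_sum_range (fun jj => (cntR k m m' S jj : ℤ) *
      ∑ i ∈ Finset.range (k+1), (if jj < i then ((m i : ℤ) - (cntL k m m' S i : ℤ)) else 0))]

end

section
variable (k : ℕ) (m m' : ℕ → ℕ)
  (S : Finset ((Σ i : Fin (k+1), Fin (m i)) ⊕ (Σ i : Fin (k+1), Fin (m' i))))

lemma cutSize_eq :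
    (cutSize (CCblow k m m') S : ℤ) = gval m m' (cntL k m m' S) (cntR k m m' S) (k+1) := by
  have h0 : (cutSize (CCblow k m m') S : ℤ)
      = ∑ u : ((Σ i : Fin (k+1), Fin (m i)) ⊕ (Σ i : Fin (k+1), Fin (m' i))),
          ∑ v : ((Σ i : Fin (k+1), Fin (m i)) ⊕ (Σ i : Fin (k+1), Fin (m' i))),
          (if ((CCblow k m m').Adj u v ∧ u ∈ S ∧ v ∉ S) then (1:ℤ) else 0) := by
    rw [cutSize, Finset.card_filter]
    push_cast
    rw [Fintype.sum_prod_type]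
  rw [h0]
  rw [Fintype.sum_sum_type]
  simp only [Fintype.sum_sum_type]
  rw [Finset.sum_add_distrib, Finset.sum_add_distrib]
  rw [blockLL, blockLR, blockRL, blockRR]
  have hC : ∑ i ∈ Finset.range (k+1), (cntL k m m' S i : ℤ) *
        ∑ j ∈ Finset.range (k+1),
          (if j < i then ((m' j : ℤ) - (cntR k m m' S j : ℤ)) else 0)
      = ∑ p ∈ Finset.range (k+1), ∑ q ∈ Finset.range p,
          ((cntL k m m' S p : ℤ) * ((m' q : ℤ) - (cntR k m m' S q : ℤ))) := by
    refine Finset.sum_congr rfl fun i hi => ?_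
    rw [← Finset.sum_filter, range_filter_lt_s18 k i (le_of_lt (Finset.mem_range.mp hi)),
      Finset.mul_sum]
  have hD : ∑ j ∈ Finset.range (k+1), (cntR k m m' S j : ℤ) *
        ∑ i ∈ Finset.range (k+1),
          (if j < i then ((m i : ℤ) - (cntL k m m' S i : ℤ)) else 0)
      = ∑ p ∈ Finset.range (k+1), ∑ q ∈ Finset.range p,
          (((m p : ℤ) - (cntL k m m' S p : ℤ)) * (cntR k m m' S q : ℤ)) := by
    have step1 : ∀ j ∈ Finset.range (k+1), (cntR k m m' S j : ℤ) *
        (∑ i ∈ Finset.range (k+1),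
          (if j < i then ((m i : ℤ) - (cntL k m m' S i : ℤ)) else 0))
        = ∑ i ∈ Finset.range (k+1),
          (if j < i then (((m i : ℤ) - (cntL k m m' S i : ℤ)) * (cntR k m m' S j : ℤ)) else 0) :=
      fun j _ => by
        rw [Finset.mul_sum]
        exact Finset.sum_congr rfl fun i _ => by split_ifs <;> ring
    rw [Finset.sum_congr rfl step1, Finset.sum_comm]
    refine Finset.sum_congr rfl fun p hp => ?_
    rw [← Finset.sum_filter, range_filter_lt_s18 k p (le_of_lt (Finset.mem_range.mp hp))]
  rw [hC, hD, gval]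
  rw [Finset.sum_sub_distrib, Finset.sum_sub_distrib]
  simp only [Finset.sum_add_distrib]
  ring

end

lemma card_filter_val_lt (n c : ℕ) :
    (Finset.univ.filter fun a : Fin n => (a : ℕ) < c).card = min c n := by
  rw [Finset.card_filter, Fin.sum_univ_eq_sum_range (fun j => if j < c then (1:ℕ) else 0),
    ← Finset.card_filter]
  have h : (Finset.range n).filter (fun j => j < c) = Finset.range (min c n) := by
    ext j; simp only [Finset.mem_filter, Finset.mem_range]; omega
  rw [h, Finset.card_range]

def inCut (k : ℕ) (m m' t t' : ℕ → ℕ) :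
    ((Σ i : Fin (k+1), Fin (m i)) ⊕ (Σ i : Fin (k+1), Fin (m' i))) → Prop
  | Sum.inl p => (p.2 : ℕ) < t ↑p.1
  | Sum.inr p => (p.2 : ℕ) < t' ↑p.1

instance (k : ℕ) (m m' t t' : ℕ → ℕ) : DecidablePred (inCut k m m' t t') := fun u =>
  match u with
  | Sum.inl p => inferInstanceAs (Decidable ((p.2 : ℕ) < t ↑p.1))
  | Sum.inr p => inferInstanceAs (Decidable ((p.2 : ℕ) < t' ↑p.1))

lemma cntL_canonical (k : ℕ) (m m' t t' : ℕ → ℕ) (ht : ∀ j, t j ≤ m j)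
    (i : ℕ) (hi : i < k+1) :
    cntL k m m' (Finset.univ.filter (inCut k m m' t t')) i = t i := by
  unfold cntL
  rw [dif_pos hi]
  simp only [Finset.mem_filter, Finset.mem_univ, true_and, inCut]
  rw [card_filter_val_lt]
  exact Nat.min_eq_left (ht i)

lemma cntR_canonical (k : ℕ) (m m' t t' : ℕ → ℕ) (ht' : ∀ j, t' j ≤ m' j)
    (i : ℕ) (hi : i < k+1) :
    cntR k m m' (Finset.univ.filter (inCut k m m' t t')) i = t' i := by
  unfold cntR
  rw [dif_pos hi]
  simp only [Finset.mem_filter, Finset.mem_univ, true_and, inCut]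
  rw [card_filter_val_lt]
  exact Nat.min_eq_left (ht' i)

lemma gval_le_maxCut (k : ℕ) (m m' t t' : ℕ → ℕ)
    (ht : ∀ j, t j ≤ m j) (ht' : ∀ j, t' j ≤ m' j) :
    gval m m' t t' (k+1) ≤ (maxCut (CCblow k m m') : ℤ) := by
  have h1 : gval m m' t t' (k+1)
      = (cutSize (CCblow k m m') (Finset.univ.filter (inCut k m m' t t')) : ℤ) := by
    rw [cutSize_eq]
    exact gval_congr _ _ _ _ _ _ _
      (fun j hj => (cntL_canonical k m m' t t' ht j hj).symm)
      (fun j hj => (cntR_canonical k m m' t t' ht' j hj).symm)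
  rw [h1]
  have h2 : cutSize (CCblow k m m') (Finset.univ.filter (inCut k m m' t t'))
      ≤ maxCut (CCblow k m m') :=
    Finset.le_sup (Finset.mem_powerset.mpr (Finset.subset_univ _))
  exact_mod_cast h2

/-- The maximum cut size of the blow-up `CC_k[m,m']` equals the maximum of `F_k(x,x')` over
all `0 ≤ x ≤ Σ_{j≤k} m(j)` and `0 ≤ x' ≤ Σ_{j≤k} m'(j)`. -/
theorem CCblow_maxCut_eq_Frec (k : ℕ) (m m' : ℕ → ℕ) :
    IsGreatest
      {v : ℤ | ∃ x x' : ℕ, x ≤ ∑ j ∈ Finset.range (k+1), m j ∧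
        x' ≤ ∑ j ∈ Finset.range (k+1), m' j ∧ v = Frec m m' (k+1) x x'}
      ((maxCut (CCblow k m m') : ℤ)) := by
  have key : ∀ x x', x ≤ ∑ j ∈ Finset.range (k+1), m j →
      x' ≤ ∑ j ∈ Finset.range (k+1), m' j →
      Frec m m' (k+1) x x' ≤ (maxCut (CCblow k m m') : ℤ) := by
    intro x x' hx hx'
    obtain ⟨t, t', ht, ht', -, -, hv⟩ := (frec_isGreatest m m' (k+1) x x' hx hx').1
    rw [hv]
    exact gval_le_maxCut k m m' t t' ht ht'
  constructor
  · obtain ⟨S, -, hS⟩ := Finset.exists_mem_eq_sup Finset.univ.powerset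
      ⟨∅, Finset.empty_mem_powerset _⟩ (cutSize (CCblow k m m'))
    have hmc : maxCut (CCblow k m m') = cutSize (CCblow k m m') S := hS
    have hx : (∑ j ∈ Finset.range (k+1), cntL k m m' S j) ≤ ∑ j ∈ Finset.range (k+1), m j :=
      Finset.sum_le_sum fun j _ => cntL_le k m m' S j
    have hx' : (∑ j ∈ Finset.range (k+1), cntR k m m' S j) ≤ ∑ j ∈ Finset.range (k+1), m' j :=
      Finset.sum_le_sum fun j _ => cntR_le k m m' S j
    refine ⟨_, _, hx, hx', le_antisymm ?_ (key _ _ hx hx')⟩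
    have hmem : ((maxCut (CCblow k m m') : ℤ)) ∈
        cutsSet m m' (k+1) (∑ j ∈ Finset.range (k+1), cntL k m m' S j)
          (∑ j ∈ Finset.range (k+1), cntR k m m' S j) := by
      refine ⟨cntL k m m' S, cntR k m m' S, cntL_le k m m' S, cntR_le k m m' S, rfl, rfl, ?_⟩
      rw [hmc, cutSize_eq]
    exact (frec_isGreatest m m' (k+1) _ _ hx hx').2 hmem
  · rintro v ⟨x, x', hx, hx', rfl⟩
    exact key x x' hx hx'
end
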